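/- arXiv:2401.04360 — 7 statements merged into one kernel-verified Lean document; each statement's English description precedes it below -/
import Mathlib

section
/- C_k(S,v,∞) is an [n+1,k,n−k+2]_q MDS code (i.e., its minimum distance equals n−k+2) if and only if S is k-zero-sum free. -/
open Polynomial Finset

noncomputable section

/-- Hamming weight of a vector. -/
def wt {F : Type*} [Field F] {N : ℕ} (w : Fin N → F) : ℕ := Set.ncard {i | w i ≠ 0}

/-- The code `C_k(S,v,∞)` as a set of vectors of length `n+1`. -/
def codeSet {F : Type*} [Field F] {n : ℕ} (a v : Fin n → F) (k : ℕ) :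
    Set (Fin (n + 1) → F) :=
  {w | ∃ f : F[X], f.natDegree ≤ k ∧ f.coeff (k - 1) = 0 ∧
    w = Fin.snoc (fun i => v i * f.eval (a i)) (f.coeff k)}

/-- The Euclidean dual of a set of vectors. -/
def dualSet {F : Type*} [Field F] {N : ℕ} (C : Set (Fin N → F)) : Set (Fin N → F) :=
  {y | ∀ x ∈ C, ∑ i, x i * y i = 0}

/-- A (nonzero) code has minimum distance `d`: some nonzero codeword has weight `d`
and every nonzero codeword has weight at least `d`. -/
def IsMinDist {F : Type*} [Field F] {N : ℕ} (C : Set (Fin N → F)) (d : ℕ) : Prop :=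
  (∃ w ∈ C, w ≠ 0 ∧ wt w = d) ∧ ∀ w ∈ C, w ≠ 0 → d ≤ wt w

/-- `u i = ∏_{j ≠ i} (a i - a j)⁻¹`. -/
def uCoeff {F : Type*} [Field F] {n : ℕ} (a : Fin n → F) (i : Fin n) : F :=
  ∏ j ∈ Finset.univ.erase i, (a i - a j)⁻¹

/-- The set of Schur (componentwise) products of elements of two codes. -/
def schurSet {F : Type*} [Field F] {N : ℕ} (C D : Set (Fin N → F)) : Set (Fin N → F) :=
  {w | ∃ c ∈ C, ∃ d ∈ D, w = c * d}

/-!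
A codeword comes from some `f` with `deg f ≤ k` and no `X ^ (k - 1)` term, and its weight is
`n - #{zeros of f on S} + [f_k ≠ 0]`. If `f_k = 0` then `deg f ≤ k - 2`, so the weight is at least
`n - k + 2`, attained by a product of `k - 2` distinct linear factors over `S`. If `f_k ≠ 0`, the
weight drops to `n - k + 1` exactly when `f` is a multiple of `∏_{a ∈ T} (X - a)` for some
`k`-subset `T ⊆ S`, and by Vieta the vanishing `X ^ (k - 1)` coefficient then says `∑_{a ∈ T} a = 0`.
-/

section Roots

variable {K ι : Type*} [Field K] {a : ι → K} {s : Finset ι} {f : K[X]}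

theorem eval_prod_X_sub_C_eq_zero_iff (ha : Function.Injective a) (j : ι) :
    (∏ i ∈ s, (X - C (a i))).eval (a j) = 0 ↔ j ∈ s := by
  simp [eval_prod, Finset.prod_eq_zero_iff, sub_eq_zero, ha.eq_iff]

theorem prod_X_sub_C_dvd_of_eval_eq_zero (ha : Function.Injective a)
    (hs : ∀ i ∈ s, f.eval (a i) = 0) : ∏ i ∈ s, (X - C (a i)) ∣ f :=
  Finset.prod_dvd_of_coprime ((pairwise_coprime_X_sub_C ha).set_pairwise _)
    fun i hi => dvd_iff_isRoot.mpr (hs i hi)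

theorem card_le_natDegree_of_eval_eq_zero (ha : Function.Injective a) (hf : f ≠ 0)
    (hs : ∀ i ∈ s, f.eval (a i) = 0) : #s ≤ f.natDegree := by
  simpa using natDegree_le_of_dvd (prod_X_sub_C_dvd_of_eval_eq_zero ha hs) hf

/-- Vieta: a polynomial of degree `#s` vanishing on `a '' s` is `c * ∏ (X - a i)`, so its
coefficient of `X ^ (#s - 1)` is `-c * ∑ i ∈ s, a i`. -/
theorem sum_eq_zero_of_eval_eq_zero (ha : Function.Injective a)
    (hs : ∀ i ∈ s, f.eval (a i) = 0) (hdeg : f.natDegree = #s)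
    (hcoeff : f.coeff (#s - 1) = 0) : ∑ i ∈ s, a i = 0 := by
  rcases s.eq_empty_or_nonempty with rfl | hne
  · exact Finset.sum_empty
  have hf : f ≠ 0 := by
    rintro rfl
    simp [eq_comm, hne.ne_empty] at hdeg
  have hfactor : f = C f.leadingCoeff * ∏ i ∈ s, (X - C (a i)) :=
    eq_leadingCoeff_mul_of_monic_of_dvd_of_natDegree_le (monic_prod_X_sub_C a s)
      (prod_X_sub_C_dvd_of_eval_eq_zero ha hs) (by simp [hdeg])
  rw [hfactor, coeff_C_mul, prod_X_sub_C_coeff_card_pred s a hne.card_pos] at hcoeff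
  simpa [leadingCoeff_ne_zero.mpr hf] using hcoeff

end Roots

section Weight

variable {F : Type*} [Field F] {n : ℕ}

theorem wt_zero : wt (0 : Fin n → F) = 0 := by
  simp [wt]

theorem ne_zero_of_wt_ne_zero {w : Fin n → F} (hw : wt w ≠ 0) : w ≠ 0 := by
  rintro rfl
  exact hw wt_zero

open Classical in
theorem wt_snoc (g : Fin n → F) (c : F) :
    wt (Fin.snoc g c : Fin (n + 1) → F) = wt g + if c = 0 then 0 else 1 := by
  simp only [wt, Set.ncard_eq_toFinset_card', Set.toFinset_ofPred, Finset.card_filter,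
    Fin.sum_univ_castSucc, Fin.snoc_castSucc, Fin.snoc_last]
  split_ifs <;> simp_all

open Classical in
theorem wt_mul_eval {a v : Fin n → F} (hv : ∀ i, v i ≠ 0) (f : F[X]) :
    wt (fun i => v i * f.eval (a i)) = n - #{i | f.eval (a i) = 0} := by
  have hsplit := Finset.card_filter_add_card_filter_not (s := univ) (fun i => f.eval (a i) = 0)
  simp only [card_univ, Fintype.card_fin] at hsplit
  simp only [wt, Set.ncard_eq_toFinset_card', Set.toFinset_ofPred, ne_eq, mul_eq_zero, hv,
    false_or]
  omega

end Weight

section Code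

variable {F : Type*} [Field F] {n k : ℕ} {a v : Fin n → F}

open Classical in
theorem wt_codeword (hv : ∀ i, v i ≠ 0) (f : F[X]) :
    wt (Fin.snoc (fun i => v i * f.eval (a i)) (f.coeff k) : Fin (n + 1) → F) =
      n - #{i | f.eval (a i) = 0} + if f.coeff k = 0 then 0 else 1 := by
  rw [wt_snoc, wt_mul_eval hv]

/-- The codeword of `∏ i ∈ T, (X - a i)`; its last coordinate is `1` exactly when `#T = k`. -/
theorem exists_mem_codeSet_wt_eq (ha : Function.Injective a) (hv : ∀ i, v i ≠ 0)
    {T : Finset (Fin n)} (hTk : #T ≤ k) (hcoeff : (∏ i ∈ T, (X - C (a i))).coeff (k - 1) = 0) :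
    ∃ w ∈ codeSet a v k, wt w = n - #T + if #T = k then 1 else 0 := by
  classical
  set f := ∏ i ∈ T, (X - C (a i))
  have hdeg : f.natDegree = #T := natDegree_finsetProd_X_sub_C_eq_card T a
  refine ⟨_, ⟨f, hdeg.trans_le hTk, hcoeff, rfl⟩, ?_⟩
  have hzeros : ({i | f.eval (a i) = 0} : Finset (Fin n)) = T := by
    ext j
    simp [f, eval_prod_X_sub_C_eq_zero_iff ha]
  rw [wt_codeword hv, hzeros]
  split_ifs with hk hT hT
  · have : f.coeff k = 1 := hT ▸ hdeg ▸ (monic_prod_X_sub_C a T).coeff_natDegree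
    simp_all
  · rfl
  · rfl
  · exact absurd (coeff_eq_zero_of_natDegree_lt (by omega)) hk

open Classical in
theorem le_wt_of_mem_codeSet (ha : Function.Injective a) (hv : ∀ i, v i ≠ 0) (hkn : k ≤ n)
    (hfree : ∀ T : Finset (Fin n), T.card = k → ∑ i ∈ T, a i ≠ 0)
    {w : Fin (n + 1) → F} (hw : w ∈ codeSet a v k) (hw0 : w ≠ 0) : n - k + 2 ≤ wt w := by
  obtain ⟨f, hdeg, hcoeff, rfl⟩ := hw
  have hf : f ≠ 0 := by
    rintro rfl
    refine hw0 (funext fun i => Fin.lastCases ?_ (fun j => ?_) i) <;> simp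
  rw [wt_codeword hv]
  set Z : Finset (Fin n) := {i | f.eval (a i) = 0}
  have hZ : ∀ i ∈ Z, f.eval (a i) = 0 := fun i hi => (Finset.mem_filter.mp hi).2
  have hZdeg := card_le_natDegree_of_eval_eq_zero ha hf hZ
  split_ifs with hk
  · have hdeg_ne : ∀ m, f.coeff m = 0 → f.natDegree ≠ m := fun m hm h =>
      hf (leadingCoeff_eq_zero.mp (by rwa [leadingCoeff, h]))
    have := hdeg_ne k hk
    have := hdeg_ne (k - 1) hcoeff
    omega
  · have hdeg_eq : f.natDegree = k := le_antisymm hdeg (le_natDegree_of_ne_zero hk)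
    have hZk : #Z ≠ k := fun h =>
      hfree Z h (sum_eq_zero_of_eval_eq_zero ha hZ (hdeg_eq.trans h.symm) (h ▸ hcoeff))
    omega

end Code

theorem stmt3_general {F : Type*} [Field F] (n k : ℕ)
    (hk3 : 3 ≤ k) (hkn : k + 2 ≤ n)
    (a : Fin n → F) (ha : Function.Injective a)
    (v : Fin n → F) (hv : ∀ i, v i ≠ 0) :
    IsMinDist (codeSet a v k) (n - k + 2) ↔
      ∀ T : Finset (Fin n), T.card = k → ∑ i ∈ T, a i ≠ 0 := by
  constructor
  · rintro ⟨-, hmin⟩ T hT hsum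
    have hcoeff : (∏ i ∈ T, (X - C (a i))).coeff (k - 1) = 0 := by
      rw [← hT, prod_X_sub_C_coeff_card_pred T a (by omega), hsum, neg_zero]
    obtain ⟨w, hw, hwt⟩ := exists_mem_codeSet_wt_eq (v := v) ha hv hT.le hcoeff
    simp only [hT, if_true] at hwt
    have := hmin w hw (ne_zero_of_wt_ne_zero (by omega))
    omega
  · intro hfree
    refine ⟨?_, fun w hw hw0 => le_wt_of_mem_codeSet ha hv (by omega) hfree hw hw0⟩
    obtain ⟨T, -, hT⟩ := Finset.exists_subset_card_eq (s := (univ : Finset (Fin n))) (n := k - 2)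
      (by simp; omega)
    have hcoeff : (∏ i ∈ T, (X - C (a i))).coeff (k - 1) = 0 :=
      coeff_eq_zero_of_natDegree_lt (by rw [natDegree_finsetProd_X_sub_C_eq_card]; omega)
    obtain ⟨w, hw, hwt⟩ := exists_mem_codeSet_wt_eq (v := v) ha hv (by omega) hcoeff
    rw [hT, if_neg (by omega)] at hwt
    exact ⟨w, hw, ne_zero_of_wt_ne_zero (by omega), by omega⟩

theorem stmt3 {F : Type*} [Field F] [Fintype F] (n k : ℕ)
    (hk3 : 3 ≤ k) (hkn : k + 2 ≤ n) (hnq : n ≤ Fintype.card F)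
    (a : Fin n → F) (ha : Function.Injective a)
    (v : Fin n → F) (hv : ∀ i, v i ≠ 0) :
    IsMinDist (codeSet a v k) (n - k + 2) ↔
      ∀ T : Finset (Fin n), T.card = k → ∑ i ∈ T, a i ≠ 0 :=
  stmt3_general n k hk3 hkn a ha v hv

end
end

section
/- If 3 ≤ k ≤ n/2, then the Schur square of C_k(S,1,∞) equals {(g(a_1), …, g(a_n), g_{2k}) : g ∈ V_{2k}}, where g_{2k} denotes the coefficient of x^{2k} in g; in particular, for 3 ≤ k < n/2 this set is the code C_{2k}(S,1,∞). -/
open Polynomial Finset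

noncomputable section

/-!
The map `f ↦ (f(a_1), …, f(a_n), f_t)` sends a product `f g` with `f, g ∈ V_k` to the Schur
product of the images of `f` and `g` (read at level `2k`), because the coefficient of `x^(2k)` in
`f g` is `f_k g_k`. Hence the span of the Schur square is the image of the product space
`V_k · V_k`, and this equals `V_{2k}` once `k ≥ 3`: every monomial `x^m` with `m ≤ 2k`,
`m ≠ 2k - 1`, is a product of two monomials with exponents in `{0, …, k - 2, k}`.
-/

/-- The paper's `V_t`. -/
def gapDegreeLE (R : Type*) [CommRing R] (t : ℕ) : Submodule R R[X] :=
  degreeLE R t ⊓ LinearMap.ker (lcoeff R (t - 1))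

section Polynomial

variable {R : Type*} [CommRing R]

theorem mem_gapDegreeLE {t : ℕ} {f : R[X]} :
    f ∈ gapDegreeLE R t ↔ f.natDegree ≤ t ∧ f.coeff (t - 1) = 0 := by
  simp [gapDegreeLE, mem_degreeLE, natDegree_le_iff_degree_le]

theorem X_pow_mem_gapDegreeLE [Nontrivial R] {t i : ℕ} (hit : i ≤ t) (hi : i ≠ t - 1) :
    (X : R[X]) ^ i ∈ gapDegreeLE R t := by
  rw [mem_gapDegreeLE, natDegree_X_pow, coeff_X_pow, if_neg (Ne.symm hi)]
  exact ⟨hit, rfl⟩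

theorem mul_mem_gapDegreeLE_two_mul {k : ℕ} (hk : 1 ≤ k) {f g : R[X]}
    (hf : f ∈ gapDegreeLE R k) (hg : g ∈ gapDegreeLE R k) :
    f * g ∈ gapDegreeLE R (2 * k) := by
  rw [mem_gapDegreeLE] at hf hg ⊢
  refine ⟨natDegree_mul_le.trans (by omega), ?_⟩
  rw [coeff_mul]
  refine sum_eq_zero fun ⟨i, j⟩ hij => ?_
  rw [HasAntidiagonal.mem_antidiagonal] at hij
  -- `i + j = 2k - 1` forces `i > k`, `j > k`, `i = k - 1` or `j = k - 1`.
  rcases lt_or_ge k i with hi | hi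
  · rw [coeff_eq_zero_of_natDegree_lt (hf.1.trans_lt hi), zero_mul]
  rcases lt_or_ge k j with hj | hj
  · rw [coeff_eq_zero_of_natDegree_lt (hg.1.trans_lt hj), mul_zero]
  rcases eq_or_ne i (k - 1) with rfl | hi'
  · rw [hf.2, zero_mul]
  · rw [show j = k - 1 by omega, hg.2, mul_zero]

theorem exists_add_eq_of_le_two_mul {k m : ℕ} (hk : 3 ≤ k) (hm : m ≤ 2 * k)
    (hm' : m ≠ 2 * k - 1) :
    ∃ i j, (i ≤ k ∧ i ≠ k - 1) ∧ (j ≤ k ∧ j ≠ k - 1) ∧ i + j = m := by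
  rcases le_or_gt m (2 * k - 4) with h | h
  · exact ⟨min m (k - 2), m - min m (k - 2), by omega, by omega, by omega⟩
  · rcases (by omega : m = 2 * k - 3 ∨ m = 2 * k - 2 ∨ m = 2 * k) with rfl | rfl | rfl
    · exact ⟨k, k - 3, by omega, by omega, by omega⟩
    · exact ⟨k, k - 2, by omega, by omega, by omega⟩
    · exact ⟨k, k, by omega, by omega, by omega⟩

theorem gapDegreeLE_two_mul_le_mul [Nontrivial R] {k : ℕ} (hk : 3 ≤ k) :
    gapDegreeLE R (2 * k) ≤ gapDegreeLE R k * gapDegreeLE R k := by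
  intro h hh
  rw [mem_gapDegreeLE] at hh
  rw [as_sum_range' h (2 * k + 1) (by omega)]
  refine Submodule.sum_mem _ fun m hm => ?_
  rw [mem_range] at hm
  rcases eq_or_ne m (2 * k - 1) with rfl | hm'
  · rw [hh.2, monomial_zero_right]
    exact Submodule.zero_mem _
  obtain ⟨i, j, hi, hj, rfl⟩ := exists_add_eq_of_le_two_mul hk (by omega) hm'
  rw [← C_mul_X_pow_eq_monomial, ← smul_eq_C_mul, pow_add]
  exact Submodule.smul_mem _ _ <| Submodule.mul_mem_mul
    (X_pow_mem_gapDegreeLE hi.1 hi.2) (X_pow_mem_gapDegreeLE hj.1 hj.2)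

theorem gapDegreeLE_mul_self [Nontrivial R] {k : ℕ} (hk : 3 ≤ k) :
    gapDegreeLE R k * gapDegreeLE R k = gapDegreeLE R (2 * k) :=
  le_antisymm
    (Submodule.mul_le.2 fun _ hf _ hg => mul_mem_gapDegreeLE_two_mul (by omega) hf hg)
    (gapDegreeLE_two_mul_le_mul hk)

end Polynomial

section Code

variable {R : Type*} [CommRing R] {n : ℕ}

def evalCoeffMap (a : Fin n → R) (t : ℕ) : R[X] →ₗ[R] (Fin (n + 1) → R) where
  toFun f := Fin.snoc (fun i => f.eval (a i)) (f.coeff t)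
  map_add' f g := by
    funext i
    refine Fin.lastCases ?_ (fun i => ?_) i <;> simp
  map_smul' c f := by
    funext i
    refine Fin.lastCases ?_ (fun i => ?_) i <;> simp

theorem evalCoeffMap_mul (a : Fin n → R) {k : ℕ} {f g : R[X]} (hf : f.natDegree ≤ k)
    (hg : g.natDegree ≤ k) :
    evalCoeffMap a (2 * k) (f * g) = evalCoeffMap a k f * evalCoeffMap a k g := by
  funext i
  refine Fin.lastCases ?_ (fun i => ?_) i
  · simp [evalCoeffMap, two_mul, coeff_mul_add_eq_of_natDegree_le hf hg]
  · simp [evalCoeffMap]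

end Code

theorem codeSet_one_eq_map {F : Type*} [Field F] {n : ℕ} (a : Fin n → F) (t : ℕ) :
    codeSet a 1 t = (gapDegreeLE F t).map (evalCoeffMap a t) := by
  ext w
  simp only [codeSet, Pi.one_apply, one_mul, Set.mem_ofPred_eq, SetLike.mem_coe,
    Submodule.mem_map, mem_gapDegreeLE, and_assoc]
  exact exists_congr fun f => by rw [@eq_comm _ w]; rfl

open scoped Pointwise in
theorem schurSet_codeSet_one {F : Type*} [Field F] {n : ℕ} (a : Fin n → F) (k : ℕ) :
    schurSet (codeSet a 1 k) (codeSet a 1 k) =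
      evalCoeffMap a (2 * k) ''
        ((gapDegreeLE F k : Set F[X]) * (gapDegreeLE F k : Set F[X])) := by
  ext w
  simp only [schurSet, codeSet_one_eq_map, SetLike.mem_coe, Submodule.mem_map,
    Set.mem_image, Set.mem_mul]
  constructor
  · rintro ⟨_, ⟨f, hf, rfl⟩, _, ⟨g, hg, rfl⟩, rfl⟩
    exact ⟨f * g, ⟨f, hf, g, hg, rfl⟩,
      evalCoeffMap_mul a (mem_gapDegreeLE.1 hf).1 (mem_gapDegreeLE.1 hg).1⟩
  · rintro ⟨_, ⟨f, hf, g, hg, rfl⟩, rfl⟩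
    exact ⟨_, ⟨f, hf, rfl⟩, _, ⟨g, hg, rfl⟩,
      evalCoeffMap_mul a (mem_gapDegreeLE.1 hf).1 (mem_gapDegreeLE.1 hg).1⟩

theorem stmt5_general {F : Type*} [Field F] (n k : ℕ)
    (hk3 : 3 ≤ k)
    (a : Fin n → F) :
    (Submodule.span F
        (schurSet (codeSet a (1 : Fin n → F) k) (codeSet a (1 : Fin n → F) k)) :
      Set (Fin (n + 1) → F)) = codeSet a (1 : Fin n → F) (2 * k) := by
  rw [schurSet_codeSet_one, ← Submodule.map_span, ← Submodule.mul_eq_span_mul_set,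
    gapDegreeLE_mul_self hk3, codeSet_one_eq_map]

theorem stmt5 {F : Type*} [Field F] [Fintype F] (n k : ℕ)
    (hk3 : 3 ≤ k) (hk2n : 2 * k ≤ n) (hkn : k + 2 ≤ n) (hnq : n ≤ Fintype.card F)
    (a : Fin n → F) (ha : Function.Injective a) :
    (Submodule.span F
        (schurSet (codeSet a (1 : Fin n → F) k) (codeSet a (1 : Fin n → F) k)) :
      Set (Fin (n + 1) → F)) = codeSet a (1 : Fin n → F) (2 * k) :=
  stmt5_general n k hk3 a
end
end

section
/- If (n+1)/2 ≤ k ≤ n−2, then the Schur square of C_k(S,1,∞) equals the full space F_q^{n+1}. -/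
open Polynomial Finset

noncomputable section

lemma mem_code_aux {F : Type*} [Field F] {n : ℕ} (a : Fin n → F) (k : ℕ) (f : F[X])
    (h1 : f.natDegree ≤ k) (h2 : f.coeff (k-1) = 0) :
    (Fin.snoc (fun i => f.eval (a i)) (f.coeff k) : Fin (n+1) → F) ∈ codeSet a 1 k :=
  ⟨f, h1, h2, by simp⟩

theorem stmt6 {F : Type*} [Field F] [Fintype F] (n k : ℕ)
    (hk3 : 3 ≤ k) (hk2n : n + 1 ≤ 2 * k) (hkn : k + 2 ≤ n) (hnq : n ≤ Fintype.card F)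
    (a : Fin n → F) (ha : Function.Injective a) :
    Submodule.span F
        (schurSet (codeSet a (1 : Fin n → F) k) (codeSet a (1 : Fin n → F) k)) = ⊤ := by
  set M := Submodule.span F
      (schurSet (codeSet a (1 : Fin n → F) k) (codeSet a (1 : Fin n → F) k)) with hM
  have schur_mem : ∀ (f g : F[X]) (w : Fin (n+1) → F),
      f.natDegree ≤ k → f.coeff (k-1) = 0 → g.natDegree ≤ k → g.coeff (k-1) = 0 →
      (∀ i, w (Fin.castSucc i) = f.eval (a i) * g.eval (a i)) →
      w (Fin.last n) = f.coeff k * g.coeff k → w ∈ M := by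
    intro f g w hf1 hf2 hg1 hg2 hw1 hw2
    apply Submodule.subset_span
    refine ⟨_, mem_code_aux a k f hf1 hf2, _, mem_code_aux a k g hg1 hg2, ?_⟩
    funext i
    refine Fin.lastCases ?_ ?_ i
    · simpa using hw2
    · intro i; simpa using hw1 i
  -- low monomials
  have low : ∀ d1 d2 : ℕ, d1 ≤ k-2 → d2 ≤ k-2 →
      (Fin.snoc (fun i => a i ^ (d1+d2)) 0 : Fin (n+1) → F) ∈ M := by
    intro d1 d2 h1 h2
    apply schur_mem (X^d1) (X^d2)
    · rw [natDegree_X_pow]; omega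
    · rw [coeff_X_pow, if_neg (by omega)]
    · rw [natDegree_X_pow]; omega
    · rw [coeff_X_pow, if_neg (by omega)]
    · intro i; simp [pow_add]
    · simp [coeff_X_pow, if_neg (show ¬ k = d1 by omega)]
  have high : ∀ e : ℕ, e ≤ k-2 →
      (Fin.snoc (fun i => a i ^ (k+e)) 0 : Fin (n+1) → F) ∈ M := by
    intro e he
    have h1 : (Fin.snoc (fun i => a i ^ k * (a i ^ k + a i ^ e)) 1 : Fin (n+1) → F) ∈ M := by
      apply schur_mem (X^k) (X^k + X^e)
      · rw [natDegree_X_pow]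
      · rw [coeff_X_pow, if_neg (by omega)]
      · exact le_trans (natDegree_add_le _ _) (by simp [natDegree_X_pow]; omega)
      · simp [coeff_X_pow, if_neg (show ¬ k-1 = k by omega), if_neg (show ¬ k-1 = e by omega)]
      · intro i; simp
      · simp [coeff_X_pow, if_neg (show ¬ k = e by omega)]
    have h2 : (Fin.snoc (fun i => a i ^ k * a i ^ k) 1 : Fin (n+1) → F) ∈ M := by
      apply schur_mem (X^k) (X^k)
      · rw [natDegree_X_pow]
      · rw [coeff_X_pow, if_neg (by omega)]
      · rw [natDegree_X_pow]
      · rw [coeff_X_pow, if_neg (by omega)]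
      · intro i; simp
      · simp [coeff_X_pow]
    have heq : (Fin.snoc (fun i => a i ^ (k+e)) 0 : Fin (n+1) → F) =
        (Fin.snoc (fun i => a i ^ k * (a i ^ k + a i ^ e)) 1 : Fin (n+1) → F) -
        (Fin.snoc (fun i => a i ^ k * a i ^ k) 1 : Fin (n+1) → F) := by
      funext i
      refine Fin.lastCases ?_ ?_ i
      · simp
      · intro i; simp [pow_add]; ring
    rw [heq]; exact Submodule.sub_mem M h1 h2
  have mono : ∀ d : ℕ, d ≤ n - 1 →
      (Fin.snoc (fun i => a i ^ d) 0 : Fin (n+1) → F) ∈ M := by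
    intro d hd
    rcases lt_or_ge d (k-1) with h | h
    · have := low d 0 (by omega) (by omega)
      simpa using this
    rcases eq_or_lt_of_le h with h' | h'
    · have := low (k-2) 1 (by omega) (by omega)
      rw [show k-2+1 = d by omega] at this
      exact this
    · have := high (d - k) (by omega)
      rw [show k + (d-k) = d by omega] at this
      exact this
  have vand : ∀ v : Fin n → F, (Fin.snoc v 0 : Fin (n+1) → F) ∈ M := by
    intro v
    have hdet : (Matrix.vandermonde a).det ≠ 0 := Matrix.det_vandermonde_ne_zero_iff.mpr ha
    have hunit : IsUnit (Matrix.vandermonde a).det := isUnit_iff_ne_zero.mpr hdet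
    obtain ⟨c, hc⟩ : ∃ c, (Matrix.vandermonde a).mulVec c = v :=
      ⟨(Matrix.vandermonde a)⁻¹.mulVec v, by
        rw [Matrix.mulVec_mulVec, Matrix.mul_nonsing_inv _ hunit, Matrix.one_mulVec]⟩
    have heq : (Fin.snoc v 0 : Fin (n+1) → F) =
        ∑ d : Fin n, c d • (Fin.snoc (fun i => a i ^ (d:ℕ)) 0 : Fin (n+1) → F) := by
      funext i
      refine Fin.lastCases ?_ ?_ i
      · simp
      · intro i
        rw [← hc]
        simp [Matrix.mulVec, dotProduct, Matrix.vandermonde, mul_comm]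
    rw [heq]
    exact Submodule.sum_mem M fun d _ =>
      Submodule.smul_mem M _ (mono d (by have := d.isLt; omega))
  have etop : (Fin.snoc (0 : Fin n → F) 1 : Fin (n+1) → F) ∈ M := by
    have h1 : (Fin.snoc (fun i => a i ^ k * a i ^ k) 1 : Fin (n+1) → F) ∈ M := by
      apply schur_mem (X^k) (X^k)
      · rw [natDegree_X_pow]
      · rw [coeff_X_pow, if_neg (by omega)]
      · rw [natDegree_X_pow]
      · rw [coeff_X_pow, if_neg (by omega)]
      · intro i; simp
      · simp [coeff_X_pow]
    have h2 := vand (fun i => a i ^ k * a i ^ k)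
    have heq : (Fin.snoc (0 : Fin n → F) 1 : Fin (n+1) → F) =
        (Fin.snoc (fun i => a i ^ k * a i ^ k) 1 : Fin (n+1) → F) -
        (Fin.snoc (fun i => a i ^ k * a i ^ k) 0 : Fin (n+1) → F) := by
      funext i
      refine Fin.lastCases ?_ ?_ i
      · simp
      · intro i; simp
    rw [heq]; exact Submodule.sub_mem M h1 h2
  rw [eq_top_iff]
  intro w _
  have heq : w = (Fin.snoc (Fin.init w) 0 : Fin (n+1) → F) +
      w (Fin.last n) • (Fin.snoc (0 : Fin n → F) 1 : Fin (n+1) → F) := by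
    funext i
    refine Fin.lastCases ?_ ?_ i
    · simp
    · intro i; simp [Fin.init]
  rw [heq]
  exact Submodule.add_mem M (vand _) (Submodule.smul_mem M _ etop)
end
end

section
/- If 3 ≤ k ≤ (n+1)/2, then the Schur square of the Euclidean dual code C_k(S,1,∞)^⊥ equals the full space F_q^{n+1}. -/
open Polynomial Finset

noncomputable section

lemma basis_coeff_aux {F : Type*} [Field F] {n : ℕ} (a : Fin n → F)
    (ha : Function.Injective a) (i : Fin n) :
    (Lagrange.basis Finset.univ a i).coeff (n - 1) = uCoeff a i := by
  have hib : (Lagrange.basis Finset.univ a i).natDegree = n - 1 := by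
    rw [Lagrange.natDegree_basis ha.injOn (mem_univ i), card_univ, Fintype.card_fin]
  rw [← hib, Polynomial.coeff_natDegree, Lagrange.basis, Polynomial.leadingCoeff_prod]
  unfold uCoeff
  refine prod_congr rfl fun j hj => ?_
  have hne : a i - a j ≠ 0 := by
    have : i ≠ j := (mem_erase.mp hj).1.symm
    exact sub_ne_zero.mpr fun h => this (ha h)
  rw [Lagrange.basisDivisor, leadingCoeff_mul, leadingCoeff_C, leadingCoeff_X_sub_C, mul_one]

lemma key_sum {F : Type*} [Field F] {n : ℕ} (a : Fin n → F)
    (ha : Function.Injective a) (q : Polynomial F) (hq : q.natDegree < n) :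
    ∑ i, uCoeff a i * q.eval (a i) = q.coeff (n - 1) := by
  have hdeg : q.degree < (#(Finset.univ : Finset (Fin n)) : WithBot ℕ) := by
    rw [card_univ, Fintype.card_fin]
    exact lt_of_le_of_lt Polynomial.degree_le_natDegree (by exact_mod_cast hq)
  conv_rhs => rw [Lagrange.eq_interpolate ha.injOn hdeg]
  rw [Lagrange.interpolate_apply, Polynomial.finset_sum_coeff]
  refine sum_congr rfl fun i _ => ?_
  rw [Polynomial.coeff_C_mul, basis_coeff_aux a ha i, mul_comm]

theorem stmt7 {F : Type*} [Field F] [Fintype F] (n k : ℕ)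
    (hk3 : 3 ≤ k) (hk2n : 2 * k ≤ n + 1) (hkn : k + 2 ≤ n) (hnq : n ≤ Fintype.card F)
    (a : Fin n → F) (ha : Function.Injective a) :
    Submodule.span F
        (schurSet (dualSet (codeSet a (1 : Fin n → F) k))
          (dualSet (codeSet a (1 : Fin n → F) k))) = ⊤ := by
  set u := uCoeff a with hu_def
  have hu0 : ∀ i, u i ≠ 0 := by
    intro i
    refine prod_ne_zero_iff.mpr fun j hj => ?_
    have : i ≠ j := (mem_erase.mp hj).1.symm
    exact inv_ne_zero (sub_ne_zero.mpr fun h => this (ha h))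
  set D := dualSet (codeSet a (1 : Fin n → F) k) with hD
  set T := Submodule.span F (schurSet D D) with hT
  set c : ℕ → F := fun s => ∑ j, u j * a j ^ (k + s) with hc_def
  set d : ℕ → (Fin (n + 1) → F) :=
    fun s => Fin.snoc (fun i => u i * a i ^ s) (-(c s)) with hd_def
  -- membership of d s in the dual
  have hd : ∀ s, s ≤ n - k → d s ∈ D := by
    intro s hs x hx
    obtain ⟨f, hdeg, hcoeff, rfl⟩ := hx
    rw [Fin.sum_univ_castSucc]
    simp only [hd_def, Fin.snoc_castSucc, Fin.snoc_last, Pi.one_apply, one_mul]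
    set r := f - C (f.coeff k) * X ^ k with hr
    have hrd : r.natDegree ≤ k - 2 := by
      refine Polynomial.natDegree_le_iff_coeff_eq_zero.mpr fun m hm => ?_
      simp only [hr, Polynomial.coeff_sub, Polynomial.coeff_C_mul, Polynomial.coeff_X_pow]
      rcases lt_trichotomy m k with h | h | h
      · have hm1 : m = k - 1 := by omega
        rw [hm1, hcoeff, if_neg (by omega), mul_zero, sub_zero]
      · rw [h, if_pos rfl, mul_one, sub_self]
      · rw [Polynomial.coeff_eq_zero_of_natDegree_lt (lt_of_le_of_lt hdeg h),
          if_neg (by omega), mul_zero, sub_zero]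
    have h2 : ∑ i, u i * ((r * X ^ s).eval (a i)) = 0 := by
      rw [key_sum a ha _ (by
        calc (r * X ^ s).natDegree ≤ r.natDegree + (X ^ s : F[X]).natDegree :=
              Polynomial.natDegree_mul_le
          _ ≤ (k - 2) + s := by rw [Polynomial.natDegree_X_pow]; omega
          _ < n := by omega)]
      exact Polynomial.coeff_eq_zero_of_natDegree_lt (by
        calc (r * X ^ s).natDegree ≤ r.natDegree + (X ^ s : F[X]).natDegree :=
              Polynomial.natDegree_mul_le
          _ ≤ (k - 2) + s := by rw [Polynomial.natDegree_X_pow]; omega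
          _ < n - 1 := by omega)
    have h1 : ∑ i, f.eval (a i) * (u i * a i ^ s)
        = ∑ i, u i * ((r * X ^ s).eval (a i)) + f.coeff k * c s := by
      rw [hc_def, Finset.mul_sum, ← Finset.sum_add_distrib]
      refine sum_congr rfl fun i _ => ?_
      have : f.eval (a i) = r.eval (a i) + f.coeff k * a i ^ k := by
        simp only [hr, Polynomial.eval_sub, Polynomial.eval_mul, Polynomial.eval_C,
          Polynomial.eval_pow, Polynomial.eval_X]
        ring
      rw [this]
      simp [pow_add]; ring
    rw [h1, h2]; ring
  -- values of c
  have hc : ∀ t, k + t ≤ n - 1 → c t = if k + t = n - 1 then 1 else 0 := by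
    intro t ht
    have h := key_sum a ha (X ^ (k + t)) (by rw [Polynomial.natDegree_X_pow]; omega)
    simp only [Polynomial.eval_pow, Polynomial.eval_X, Polynomial.coeff_X_pow] at h
    rw [hc_def]
    simp only []
    rw [h]
    by_cases hh : k + t = n - 1
    · rw [if_pos hh.symm, if_pos hh]
    · rw [if_neg (Ne.symm hh), if_neg hh]
  have hw : ∀ s t, s ≤ n - k → t ≤ n - k → d s * d t ∈ T :=
    fun s t hs ht => Submodule.subset_span ⟨d s, hd s hs, d t, hd t ht, rfl⟩
  -- e_infinity
  have he : Pi.single (Fin.last n) (1 : F) ∈ T := by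
    have h1 := hw (n - k - 1) (n - k - 1) (by omega) (by omega)
    have h2 := hw (n - k) (n - k - 2) (le_refl _) (by omega)
    have heq : Pi.single (Fin.last n) (1 : F)
        = d (n - k - 1) * d (n - k - 1) - d (n - k) * d (n - k - 2) := by
      funext i
      refine Fin.lastCases ?_ ?_ i
      · simp only [Pi.single_eq_same, Pi.sub_apply, Pi.mul_apply, hd_def, Fin.snoc_last]
        rw [hc (n - k - 1) (by omega), hc (n - k - 2) (by omega),
          if_pos (by omega), if_neg (by omega)]
        ring
      · intro j
        have hne : Fin.castSucc j ≠ Fin.last n := Fin.ne_last_of_lt (Fin.castSucc_lt_last j)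
        simp only [Pi.single_eq_of_ne hne, Pi.sub_apply, Pi.mul_apply, hd_def,
          Fin.snoc_castSucc]
        have hpow : a j ^ (n - k - 1) * a j ^ (n - k - 1)
            = a j ^ (n - k) * a j ^ (n - k - 2) := by
          rw [← pow_add, ← pow_add]; congr 1; omega
        linear_combination (-(u j ^ 2)) * hpow
    rw [heq]; exact Submodule.sub_mem T h1 h2
  -- the vectors v m
  have hv : ∀ m, m ≤ n - 1 →
      (Fin.snoc (fun i => u i ^ 2 * a i ^ m) 0 : Fin (n + 1) → F) ∈ T := by
    intro m hm
    set s := min m (n - k) with hs_def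
    set t := m - s with ht_def
    have hs : s ≤ n - k := min_le_right _ _
    have ht : t ≤ n - k := by omega
    have hst : s + t = m := by omega
    have heq : (Fin.snoc (fun i => u i ^ 2 * a i ^ m) 0 : Fin (n + 1) → F)
        = d s * d t - ((-(c s)) * (-(c t))) • (Pi.single (Fin.last n) 1 : Fin (n + 1) → F) := by
      funext i
      refine Fin.lastCases ?_ ?_ i
      · simp only [Fin.snoc_last, Pi.sub_apply, Pi.mul_apply, Pi.smul_apply,
          Pi.single_eq_same, hd_def, smul_eq_mul]
        ring
      · intro j
        have hne : Fin.castSucc j ≠ Fin.last n := Fin.ne_last_of_lt (Fin.castSucc_lt_last j)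
        simp only [Fin.snoc_castSucc, Pi.sub_apply, Pi.mul_apply, Pi.smul_apply,
          Pi.single_eq_of_ne hne, hd_def, smul_eq_mul]
        rw [← hst, pow_add]; ring
    rw [heq]
    exact Submodule.sub_mem T (hw s t hs ht) (Submodule.smul_mem T _ he)
  -- the standard basis vectors below the last one
  have hsingle : ∀ i : Fin n, Pi.single (Fin.castSucc i) (1 : F) ∈ T := by
    intro i
    set V := Matrix.vandermonde a with hV_def
    have hVdet : IsUnit V.det := by
      rw [isUnit_iff_ne_zero, hV_def, Matrix.det_vandermonde_ne_zero_iff]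
      exact ha
    set cvec := V⁻¹.mulVec (Pi.single i ((u i ^ 2)⁻¹)) with hcvec_def
    have hmv : V.mulVec cvec = Pi.single i ((u i ^ 2)⁻¹) := by
      rw [hcvec_def, Matrix.mulVec_mulVec, Matrix.mul_nonsing_inv _ hVdet, Matrix.one_mulVec]
    have heq : Pi.single (Fin.castSucc i) (1 : F)
        = ∑ m : Fin n, cvec m •
            (Fin.snoc (fun j => u j ^ 2 * a j ^ (m : ℕ)) 0 : Fin (n + 1) → F) := by
      funext x
      rw [Finset.sum_apply]
      refine Fin.lastCases ?_ ?_ x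
      · have hne : Fin.castSucc i ≠ Fin.last n := Fin.ne_last_of_lt (Fin.castSucc_lt_last i)
        simp [Pi.single_eq_of_ne hne.symm, Fin.snoc_last]
      · intro j
        have hrhs : ∑ m : Fin n, (cvec m • (Fin.snoc (fun j => u j ^ 2 * a j ^ (m : ℕ)) 0 :
            Fin (n + 1) → F)) (Fin.castSucc j) = u j ^ 2 * (V.mulVec cvec) j := by
          rw [Matrix.mulVec, dotProduct, Finset.mul_sum]
          refine sum_congr rfl fun m _ => ?_
          simp only [Pi.smul_apply, Fin.snoc_castSucc, smul_eq_mul, hV_def,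
            Matrix.vandermonde]
          simp only [Matrix.of_apply]
          ring
        rw [hrhs, hmv]
        rcases eq_or_ne j i with rfl | hji
        · rw [Pi.single_eq_same, Pi.single_eq_same, mul_inv_cancel₀ (pow_ne_zero 2 (hu0 j))]
        · rw [Pi.single_eq_of_ne (by simpa using hji),
            Pi.single_eq_of_ne hji, mul_zero]
    rw [heq]
    exact Submodule.sum_mem T fun m _ =>
      Submodule.smul_mem T _ (hv (m : ℕ) (by omega))
  -- conclude
  rw [eq_top_iff]
  rintro y -
  have hy : y = ∑ i, y i • (Pi.single i 1 : Fin (n + 1) → F) := by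
    funext x
    rw [Finset.sum_apply]
    simp [Pi.single_apply, eq_comm]
  rw [hy]
  exact Submodule.sum_mem T fun i _ =>
    Submodule.smul_mem T _ (Fin.lastCases he hsingle i)
end
end

section
/- If (n+1)/2 < k ≤ n−2, then the Schur square of the Euclidean dual code C_k(S,1,∞)^⊥ equals C_1 + C_{2n−2k+1}, where C_1 is the one-dimensional code spanned by (0,…,0,1) ∈ F_q^{n+1} and C_{2n−2k+1} = {(u_1² g(a_1), …, u_n² g(a_n), 0) : g ∈ F_q[x], deg g ≤ 2n−2k}. -/
open Polynomial Finset

noncomputable section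

/-!
With `u_i` the Lagrange weights, `∑ u_i h(a_i) = h_{n-1} + (∑ a_i) h_n` whenever `deg h ≤ n`
(subtract `h_n` times the nodal polynomial and read off the coefficient of `x^{n-1}` of the
interpolant). Pairing with the code words `f = f_k x^k + (terms of degree ≤ k - 2)` shows that the
dual of `C_k(S,1,∞)` consists of the words `(u_i g(a_i))_i` completed by
`-(g_{m-1} + (∑ a_i) g_m)`, for `deg g ≤ m := n - k`. The product of two such words is
`(u_i² (gh)(a_i))_i` plus a multiple of `e_∞ = (0,…,0,1)`, and `e_∞` itself is
`w(x^{m-1})² - w(x^m) w(x^{m-2})`. Every `g` of degree `≤ 2m` is `(g mod x^m) + x^m (g div x^m)`,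
a sum of two products of polynomials of degree `≤ m`, which gives the reverse inclusion.
-/

section

variable {F : Type*} [Field F] {n : ℕ} (a : Fin n → F)

lemma sum_uCoeff_mul_eval_of_degree_lt (ha : Function.Injective a) {h : F[X]}
    (hh : h.degree < n) : ∑ i, uCoeff a i * h.eval (a i) = h.coeff (n - 1) := by
  have key := Lagrange.coeff_eq_sum (s := univ) ha.injOn (by simpa using hh)
  rw [card_univ, Fintype.card_fin] at key
  rw [key]
  refine sum_congr rfl fun i _ => ?_
  rw [uCoeff, prod_inv_distrib, div_eq_mul_inv, mul_comm]

lemma sum_uCoeff_mul_eval_of_natDegree_le (ha : Function.Injective a) (hn : 0 < n) {h : F[X]}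
    (hh : h.natDegree ≤ n) :
    ∑ i, uCoeff a i * h.eval (a i) = h.coeff (n - 1) + (∑ i, a i) * h.coeff n := by
  set L := Lagrange.nodal univ a
  have hL : L.natDegree = n := by simp [L, Lagrange.natDegree_nodal]
  have hLpred : L.coeff (n - 1) = -∑ i, a i := by
    simpa [L, Lagrange.nodal_eq] using prod_X_sub_C_coeff_card_pred univ a (by simpa)
  have hr : (h - C (h.coeff n) * L).degree < n := by
    rw [degree_lt_iff_coeff_zero]
    intro m hm
    rw [coeff_sub, coeff_C_mul]
    obtain rfl | hlt := (show n ≤ m by exact_mod_cast hm).eq_or_lt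
    · rw [← hL, Lagrange.nodal_monic.coeff_natDegree, hL, mul_one, sub_self]
    · rw [coeff_eq_zero_of_natDegree_lt (hh.trans_lt hlt),
        coeff_eq_zero_of_natDegree_lt (hL.trans_lt hlt), mul_zero, sub_zero]
  calc ∑ i, uCoeff a i * h.eval (a i)
      = ∑ i, uCoeff a i * (h - C (h.coeff n) * L).eval (a i) := by
        simp [L, Lagrange.eval_nodal_at_node (mem_univ _)]
    _ = h.coeff (n - 1) + (∑ i, a i) * h.coeff n := by
        rw [sum_uCoeff_mul_eval_of_degree_lt a ha hr, coeff_sub, coeff_C_mul, hLpred]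
        ring

lemma coeff_mul_pred_of_coeff_pred_eq_zero {k m : ℕ} (hk : 1 ≤ k) (hm : 1 ≤ m) {f g : F[X]}
    (hf : f.natDegree ≤ k) (hf' : f.coeff (k - 1) = 0) (hg : g.natDegree ≤ m) :
    (f * g).coeff (k + m - 1) = f.coeff k * g.coeff (m - 1) := by
  rw [coeff_mul, sum_eq_single_of_mem (k, m - 1) (by rw [HasAntidiagonal.mem_antidiagonal]; omega)]
  rintro ⟨i, j⟩ hij hne
  rw [HasAntidiagonal.mem_antidiagonal] at hij
  simp only [ne_eq, Prod.mk.injEq] at hij hne ⊢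
  rcases lt_trichotomy i (k - 1) with hi | rfl | hi
  · rw [coeff_eq_zero_of_natDegree_lt (p := g) (by omega), mul_zero]
  · rw [hf', zero_mul]
  · rw [coeff_eq_zero_of_natDegree_lt (p := f) (by omega), zero_mul]

def dualLast (m : ℕ) (g : F[X]) : F := -(g.coeff (m - 1) + (∑ i, a i) * g.coeff m)

def dualWord (m : ℕ) (g : F[X]) : Fin (n + 1) → F :=
  Fin.snoc (fun i => uCoeff a i * g.eval (a i)) (dualLast a m g)

def dualCode (m : ℕ) : Set (Fin (n + 1) → F) :=
  {y | ∃ g : F[X], g.natDegree ≤ m ∧ y = dualWord a m g}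

def sqWord (g : F[X]) : Fin (n + 1) → F :=
  Fin.snoc (fun i => uCoeff a i ^ 2 * g.eval (a i)) 0

lemma sum_eval_mul_uCoeff_mul_eval (ha : Function.Injective a) {k : ℕ} (hk : 1 ≤ k)
    (hkn : k < n) {f g : F[X]} (hf : f.natDegree ≤ k) (hf' : f.coeff (k - 1) = 0)
    (hg : g.natDegree ≤ n - k) :
    ∑ i, f.eval (a i) * (uCoeff a i * g.eval (a i)) = -(f.coeff k * dualLast a (n - k) g) := by
  have hfg : (f * g).natDegree ≤ n := natDegree_mul_le.trans (by omega)
  have hpred := coeff_mul_pred_of_coeff_pred_eq_zero hk (by omega : 1 ≤ n - k) hf hf' hg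
  have htop := coeff_mul_add_eq_of_natDegree_le hf hg
  rw [Nat.add_sub_cancel' hkn.le] at hpred htop
  calc ∑ i, f.eval (a i) * (uCoeff a i * g.eval (a i))
      = ∑ i, uCoeff a i * (f * g).eval (a i) := by
        refine sum_congr rfl fun i _ => ?_
        rw [eval_mul]; ring
    _ = -(f.coeff k * dualLast a (n - k) g) := by
        rw [sum_uCoeff_mul_eval_of_natDegree_le a ha (by omega) hfg, hpred, htop, dualLast]
        ring

lemma dualWord_mem_dualSet (ha : Function.Injective a) {k : ℕ} (hk : 1 ≤ k) (hkn : k < n)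
    {g : F[X]} (hg : g.natDegree ≤ n - k) :
    dualWord a (n - k) g ∈ dualSet (codeSet a 1 k) := by
  rintro _ ⟨f, hf, hf', rfl⟩
  simp only [Fin.sum_univ_castSucc, dualWord, Fin.snoc_castSucc, Fin.snoc_last, Pi.one_apply,
    one_mul, sum_eval_mul_uCoeff_mul_eval a ha hk hkn hf hf' hg]
  ring

lemma uCoeff_ne_zero (ha : Function.Injective a) (i : Fin n) : uCoeff a i ≠ 0 :=
  Lagrange.nodalWeight_ne_zero ha.injOn (mem_univ i)

lemma degree_lt_sub_of_sum_uCoeff_mul_pow_eval_eq_zero (ha : Function.Injective a) {g : F[X]}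
    (hg : g.degree < n) {t : ℕ} (ht : t ≤ n)
    (horth : ∀ j < t, ∑ i, uCoeff a i * (a i ^ j * g.eval (a i)) = 0) :
    g.degree < ↑(n - t) := by
  induction t with
  | zero => simpa using hg
  | succ t ih =>
    have hlt := (degree_lt_iff_coeff_zero _ _).mp (ih (by omega) fun j hj => horth j (by omega))
    have hXg : (X ^ t * g).degree < ↑n := by
      rw [degree_lt_iff_coeff_zero]
      intro m hm
      rw [coeff_X_pow_mul']
      split_ifs
      · exact hlt _ (by omega)
      · rfl
    have hcoeff : g.coeff (n - t - 1) = 0 := by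
      have key := sum_uCoeff_mul_eval_of_degree_lt a ha hXg
      simp only [eval_mul, eval_pow, eval_X, horth t (by omega)] at key
      rwa [coeff_X_pow_mul', if_pos (by omega), show n - 1 - t = n - t - 1 by omega,
        eq_comm] at key
    rw [degree_lt_iff_coeff_zero]
    intro m hm
    obtain rfl | hm := (show n - t - 1 ≤ m by omega).eq_or_lt
    · exact hcoeff
    · exact hlt m (by omega)

lemma sum_pow_mul_eq_of_mem_dualSet {k : ℕ} {y : Fin (n + 1) → F}
    (hy : y ∈ dualSet (codeSet a 1 k)) {j : ℕ} (hjk : j ≤ k) (hj : j ≠ k - 1) :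
    ∑ i, a i ^ j * y i.castSucc + (X ^ j : F[X]).coeff k * y (Fin.last n) = 0 := by
  have hmem : Fin.snoc (fun i => (1 : Fin n → F) i * (X ^ j : F[X]).eval (a i))
      ((X ^ j : F[X]).coeff k) ∈ codeSet a 1 k :=
    ⟨X ^ j, by rwa [natDegree_X_pow], by rw [coeff_X_pow, if_neg (by omega)], rfl⟩
  simpa only [Fin.sum_univ_castSucc, Fin.snoc_castSucc, Fin.snoc_last, Pi.one_apply, one_mul,
    eval_pow, eval_X] using hy _ hmem

lemma exists_dualWord_eq_of_mem_dualSet (ha : Function.Injective a) {k : ℕ} (hk : 1 ≤ k)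
    (hkn : k < n) {y : Fin (n + 1) → F} (hy : y ∈ dualSet (codeSet a 1 k)) :
    ∃ g : F[X], g.natDegree ≤ n - k ∧ y = dualWord a (n - k) g := by
  set g := Lagrange.interpolate univ a fun i => (uCoeff a i)⁻¹ * y i.castSucc
  have hval (i : Fin n) : uCoeff a i * g.eval (a i) = y i.castSucc := by
    rw [Lagrange.eval_interpolate_at_node _ ha.injOn (mem_univ i), ← mul_assoc,
      mul_inv_cancel₀ (uCoeff_ne_zero a ha i), one_mul]
  have hdeg : g.degree < ↑(n - (k - 1)) := by
    refine degree_lt_sub_of_sum_uCoeff_mul_pow_eval_eq_zero a ha ?_ (by omega) fun j hj => ?_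
    · have := Lagrange.degree_interpolate_lt (s := univ)
        (fun i => (uCoeff a i)⁻¹ * y i.castSucc) ha.injOn
      rwa [card_univ, Fintype.card_fin] at this
    · have := sum_pow_mul_eq_of_mem_dualSet a hy (j := j) (by omega) (by omega)
      rw [coeff_X_pow, if_neg (by omega), zero_mul, add_zero] at this
      simpa only [mul_left_comm _ (a _ ^ j), hval] using this
  have hg : g.natDegree ≤ n - k := by
    rw [natDegree_le_iff_coeff_eq_zero]
    exact fun m hm => (degree_lt_iff_coeff_zero _ _).mp hdeg m (by omega)
  refine ⟨g, hg, funext fun x => ?_⟩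
  induction x using Fin.lastCases with
  | cast i => rw [dualWord, Fin.snoc_castSucc, hval]
  | last =>
    have hpair := sum_eval_mul_uCoeff_mul_eval a ha hk hkn (f := X ^ k)
      (natDegree_X_pow_le k) (by rw [coeff_X_pow, if_neg (by omega)]) hg
    simp only [hval, eval_pow, eval_X, coeff_X_pow_self, one_mul] at hpair
    have hlast := sum_pow_mul_eq_of_mem_dualSet a hy le_rfl (by omega)
    rw [coeff_X_pow_self, one_mul, hpair] at hlast
    rw [dualWord, Fin.snoc_last]
    linear_combination hlast

lemma dualSet_codeSet_eq (ha : Function.Injective a) {k : ℕ} (hk : 1 ≤ k) (hkn : k < n) :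
    dualSet (codeSet a 1 k) = dualCode a (n - k) := by
  ext y
  constructor
  · exact exists_dualWord_eq_of_mem_dualSet a ha hk hkn
  · rintro ⟨g, hg, rfl⟩
    exact dualWord_mem_dualSet a ha hk hkn hg

lemma dualWord_mul_dualWord (m : ℕ) (p q : F[X]) :
    dualWord a m p * dualWord a m q =
      (dualLast a m p * dualLast a m q) • Fin.snoc (0 : Fin n → F) 1 + sqWord a (p * q) := by
  funext x
  induction x using Fin.lastCases <;> simp [dualWord, sqWord, eval_mul]; ring

lemma sqWord_add (p q : F[X]) : sqWord a (p + q) = sqWord a p + sqWord a q := by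
  funext x
  induction x using Fin.lastCases <;> simp [sqWord, mul_add]

lemma dualWord_X_pow_mem_dualCode {m j : ℕ} (hj : j ≤ m) :
    dualWord a m (X ^ j) ∈ dualCode a m :=
  ⟨X ^ j, (natDegree_X_pow_le j).trans hj, rfl⟩

lemma snoc_zero_one_mem_span_schurSet {m : ℕ} (hm : 2 ≤ m) :
    Fin.snoc (0 : Fin n → F) 1 ∈ Submodule.span F (schurSet (dualCode a m) (dualCode a m)) := by
  have hX : (X : F[X]) ^ (m - 1) * X ^ (m - 1) = X ^ m * X ^ (m - 2) := by
    rw [← pow_add, ← pow_add]; congr 1; omega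
  have hlast₁ : dualLast a m (X ^ (m - 1)) = -1 := by
    simp [dualLast, coeff_X_pow, show m ≠ m - 1 by omega]
  have hlast₂ : dualLast a m (X ^ (m - 2)) = 0 := by
    simp [dualLast, coeff_X_pow, show m - 1 ≠ m - 2 by omega, show m ≠ m - 2 by omega]
  have key : Fin.snoc (0 : Fin n → F) 1 =
      dualWord a m (X ^ (m - 1)) * dualWord a m (X ^ (m - 1)) -
        dualWord a m (X ^ m) * dualWord a m (X ^ (m - 2)) := by
    rw [dualWord_mul_dualWord, dualWord_mul_dualWord, hX, hlast₁, hlast₂]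
    simp
  rw [key]
  exact sub_mem
    (Submodule.subset_span ⟨_, dualWord_X_pow_mem_dualCode a (by omega),
      _, dualWord_X_pow_mem_dualCode a (by omega), rfl⟩)
    (Submodule.subset_span ⟨_, dualWord_X_pow_mem_dualCode a le_rfl,
      _, dualWord_X_pow_mem_dualCode a (by omega), rfl⟩)

lemma sqWord_mul_mem_span_schurSet {m : ℕ} (hm : 2 ≤ m) {p q : F[X]} (hp : p.natDegree ≤ m)
    (hq : q.natDegree ≤ m) :
    sqWord a (p * q) ∈ Submodule.span F (schurSet (dualCode a m) (dualCode a m)) := by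
  have h := dualWord_mul_dualWord a m p q
  rw [← sub_eq_iff_eq_add'] at h
  rw [← h]
  exact sub_mem (Submodule.subset_span ⟨_, ⟨p, hp, rfl⟩, _, ⟨q, hq, rfl⟩, rfl⟩)
    (Submodule.smul_mem _ _ (snoc_zero_one_mem_span_schurSet a hm))

lemma sqWord_mem_span_schurSet {m : ℕ} (hm : 2 ≤ m) {g : F[X]} (hg : g.natDegree ≤ 2 * m) :
    sqWord a g ∈ Submodule.span F (schurSet (dualCode a m) (dualCode a m)) := by
  have hXm : (X ^ m : F[X]).Monic := monic_X_pow m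
  rw [← modByMonic_add_div g (X ^ m), ← one_mul (g %ₘ X ^ m), sqWord_add]
  refine add_mem (sqWord_mul_mem_span_schurSet a hm (by simp) ?_)
    (sqWord_mul_mem_span_schurSet a hm (natDegree_X_pow_le m) ?_)
  · exact (natDegree_modByMonic_le g hXm).trans (natDegree_X_pow_le m)
  · rw [natDegree_divByMonic g hXm, natDegree_X_pow]; omega

lemma span_schurSet_dualCode {m : ℕ} (hm : 2 ≤ m) :
    Submodule.span F (schurSet (dualCode a m) (dualCode a m)) =
      Submodule.span F {Fin.snoc (0 : Fin n → F) 1} ⊔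
        Submodule.span F {w | ∃ g : F[X], g.natDegree ≤ 2 * m ∧ w = sqWord a g} := by
  refine le_antisymm (Submodule.span_le.mpr ?_) (sup_le (Submodule.span_le.mpr ?_)
    (Submodule.span_le.mpr ?_))
  · rintro _ ⟨_, ⟨p, hp, rfl⟩, _, ⟨q, hq, rfl⟩, rfl⟩
    rw [dualWord_mul_dualWord]
    exact add_mem
      (Submodule.mem_sup_left (Submodule.smul_mem _ _ (Submodule.mem_span_singleton_self _)))
      (Submodule.mem_sup_right
        (Submodule.subset_span ⟨p * q, natDegree_mul_le.trans (by omega), rfl⟩))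
  · rintro _ rfl
    exact snoc_zero_one_mem_span_schurSet a hm
  · rintro _ ⟨g, hg, rfl⟩
    exact sqWord_mem_span_schurSet a hm hg

end

theorem stmt8_general {F : Type*} [Field F] (n k : ℕ)
    (hk3 : 3 ≤ k) (hkn : k + 2 ≤ n)
    (a : Fin n → F) (ha : Function.Injective a) :
    Submodule.span F
        (schurSet (dualSet (codeSet a (1 : Fin n → F) k))
          (dualSet (codeSet a (1 : Fin n → F) k))) =
      Submodule.span F ({Fin.snoc (0 : Fin n → F) 1} : Set (Fin (n + 1) → F)) ⊔
        Submodule.span F {w : Fin (n + 1) → F | ∃ g : F[X],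
          g.natDegree ≤ 2 * n - 2 * k ∧
          w = Fin.snoc (fun i => (uCoeff a i) ^ 2 * g.eval (a i)) 0} := by
  rw [dualSet_codeSet_eq a ha (by omega) (by omega), show 2 * n - 2 * k = 2 * (n - k) by omega]
  exact span_schurSet_dualCode a (by omega)

theorem stmt8 {F : Type*} [Field F] [Fintype F] (n k : ℕ)
    (hk3 : 3 ≤ k) (hk2n : n + 1 < 2 * k) (hkn : k + 2 ≤ n) (hnq : n ≤ Fintype.card F)
    (a : Fin n → F) (ha : Function.Injective a) :
    Submodule.span F
        (schurSet (dualSet (codeSet a (1 : Fin n → F) k))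
          (dualSet (codeSet a (1 : Fin n → F) k))) =
      Submodule.span F ({Fin.snoc (0 : Fin n → F) 1} : Set (Fin (n + 1) → F)) ⊔
        Submodule.span F {w : Fin (n + 1) → F | ∃ g : F[X],
          g.natDegree ≤ 2 * n - 2 * k ∧
          w = Fin.snoc (fun i => (uCoeff a i) ^ 2 * g.eval (a i)) 0} :=
  stmt8_general n k hk3 hkn a ha
end
end

section
/- If S contains a k-zero-sum subset, then the number of codewords of Hamming weight n−k+1 (the minimum weight) in the NMDS code C_k(S,v,∞) equals (q−1)·N(k,0,S), and this also equals the number of codewords of Hamming weight k in the dual code C_k(S,v,∞)^⊥; here N(k,0,S) is the number of k-element subsets of S whose elements sum to 0. -/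
open Polynomial Finset

noncomputable section

namespace Helpers
variable {F : Type*} [Field F] {n : ℕ}

lemma wt_eq_of_support {m : ℕ} (w : Fin m → F) (T : Finset (Fin m))
    (h : ∀ i, w i ≠ 0 ↔ i ∈ T) : wt w = T.card := by
  have : {i | w i ≠ 0} = ↑T := by ext i; simp [h]
  rw [wt, this, Set.ncard_coe_finset]

lemma support_snoc_eq {m : ℕ} (g : Fin m → F) (c : F) (hc : c ≠ 0) :
    {i : Fin (m+1) | (Fin.snoc g c : Fin (m+1) → F) i ≠ 0}
      = Fin.castSucc '' {i | g i ≠ 0} ∪ {Fin.last m} := by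
  ext i
  refine Fin.lastCases ?_ ?_ i
  · simp [Fin.snoc_last, hc]
  · intro j
    have hne : Fin.castSucc j ≠ Fin.last m := (Fin.castSucc_lt_last j).ne
    simp only [Set.mem_setOf_eq, Fin.snoc_castSucc, Set.mem_union, Set.mem_singleton_iff, hne,
      or_false, Set.mem_image]
    constructor
    · intro h; exact ⟨j, h, rfl⟩
    · rintro ⟨j', hj', hj''⟩
      rwa [← Fin.castSucc_injective m hj'']

lemma wt_snoc_ne {m : ℕ} (g : Fin m → F) (c : F) (hc : c ≠ 0) :
    wt (Fin.snoc g c : Fin (m+1) → F) = wt g + 1 := by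
  rw [wt, support_snoc_eq g c hc, Set.ncard_union_eq, wt,
    Set.ncard_image_of_injective _ (Fin.castSucc_injective m), Set.ncard_singleton]
  · rw [Set.disjoint_singleton_right]
    rintro ⟨j, _, hj⟩
    exact (Fin.castSucc_lt_last j).ne hj

lemma wt_snoc_eq {m : ℕ} (g : Fin m → F) :
    wt (Fin.snoc g (0 : F) : Fin (m+1) → F) = wt g := by
  have hset : {i : Fin (m+1) | (Fin.snoc g (0:F) : Fin (m+1) → F) i ≠ 0}
      = Fin.castSucc '' {i | g i ≠ 0} := by
    ext i
    refine Fin.lastCases ?_ ?_ i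
    · simp only [Set.mem_setOf_eq, Fin.snoc_last, ne_eq, not_true_eq_false, false_iff,
        Set.mem_image, not_exists]
      rintro j ⟨hj, hj'⟩
      exact (Fin.castSucc_lt_last j).ne hj'
    · intro j
      simp only [Set.mem_setOf_eq, Fin.snoc_castSucc, Set.mem_image]
      constructor
      · intro h; exact ⟨j, h, rfl⟩
      · rintro ⟨j', hj', hj''⟩
        rwa [← Fin.castSucc_injective m hj'']
  rw [wt, hset, Set.ncard_image_of_injective _ (Fin.castSucc_injective m), wt]

lemma vand_kernel {a : Fin n → F} (ha : Function.Injective a) {m : ℕ} {c : Fin n → F}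
    (s : Finset (Fin n)) (hs : ∀ i, c i ≠ 0 → i ∈ s) (hcard : s.card ≤ m)
    (hsum : ∀ j, j < m → ∑ i, c i * a i ^ j = 0) : c = 0 := by
  classical
  let e := s.equivFin
  have hb : Function.Injective (fun t : Fin s.card => a ((e.symm t) : Fin n)) := by
    intro x y hxy
    exact e.symm.injective (Subtype.coe_injective (ha hxy))
  have hz : (fun t : Fin s.card => c ((e.symm t) : Fin n)) = 0 := by
    apply Matrix.eq_zero_of_forall_pow_sum_mul_pow_eq_zero hb
    intro j
    have h1 : ∑ t : Fin s.card, c ((e.symm t) : Fin n) * (a ((e.symm t) : Fin n)) ^ (j : ℕ)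
        = ∑ i ∈ s, c i * a i ^ (j : ℕ) :=
      (Equiv.sum_comp e.symm (fun i : s => c i * a i ^ (j : ℕ))).trans
        (Finset.sum_coe_sort s (fun i => c i * a i ^ (j : ℕ)))
    have h2 : ∑ i ∈ s, c i * a i ^ (j : ℕ) = ∑ i, c i * a i ^ (j : ℕ) := by
      apply Finset.sum_subset (Finset.subset_univ s)
      intro i _ hi
      have : c i = 0 := by by_contra h; exact hi (hs i h)
      simp [this]
    rw [h1, h2]
    exact hsum _ (lt_of_lt_of_le j.isLt hcard)
  funext i
  by_contra hci
  have hi := hs i hci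
  have := congrFun hz (e ⟨i, hi⟩)
  simp only [Equiv.symm_apply_apply, Pi.zero_apply] at this
  exact hci this

lemma basis_coeff {ι : Type*} [DecidableEq ι] (T : Finset ι) (b : ι → F)
    (hb : Set.InjOn b T) {i : ι} (hi : i ∈ T) :
    (Lagrange.basis T b i).coeff (T.card - 1) = ∏ j ∈ T.erase i, (b i - b j)⁻¹ := by
  have h1 := Lagrange.natDegree_basis hb hi
  rw [← h1, Polynomial.coeff_natDegree, Lagrange.basis, Polynomial.leadingCoeff_prod]
  apply Finset.prod_congr rfl
  intro j hj
  obtain ⟨hji, hjT⟩ := Finset.mem_erase.mp hj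
  rw [Lagrange.basisDivisor, Polynomial.leadingCoeff_mul, Polynomial.leadingCoeff_C,
    (Polynomial.monic_X_sub_C _).leadingCoeff, mul_one]

lemma lag_sum_lt (T : Finset (Fin n)) {a : Fin n → F} (ha : Function.Injective a)
    (f : F[X]) (hdeg : f.degree < (T.card : ℕ)) :
    ∑ i ∈ T, (∏ j ∈ T.erase i, (a i - a j)⁻¹) * f.eval (a i) = f.coeff (T.card - 1) := by
  classical
  have hinj : Set.InjOn a T := ha.injOn
  have h := Lagrange.eq_interpolate hinj hdeg
  conv_rhs => rw [h]
  rw [Lagrange.interpolate_apply, Polynomial.finset_sum_coeff]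
  apply Finset.sum_congr rfl
  intro i hi
  rw [Polynomial.coeff_C_mul, basis_coeff T a hinj hi]
  ring

lemma lag_sum_le (T : Finset (Fin n)) {a : Fin n → F} (ha : Function.Injective a)
    (hT : T.Nonempty) (f : F[X]) (hdeg : f.natDegree ≤ T.card) :
    ∑ i ∈ T, (∏ j ∈ T.erase i, (a i - a j)⁻¹) * f.eval (a i)
      = f.coeff (T.card - 1) + f.coeff T.card * ∑ i ∈ T, a i := by
  classical
  set P : F[X] := ∏ i ∈ T, (X - C (a i)) with hP
  have hPm : P.Monic := monic_prod_of_monic _ _ fun i _ => monic_X_sub_C _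
  have hPdeg : P.natDegree = T.card := by
    rw [hP, natDegree_prod _ _ fun i _ => X_sub_C_ne_zero (a i)]
    simp
  set g : F[X] := f - C (f.coeff T.card) * P with hg
  have hgdeg : g.degree < (T.card : ℕ) := by
    rw [Polynomial.degree_lt_iff_coeff_zero]
    intro m hm
    rw [hg, Polynomial.coeff_sub, Polynomial.coeff_C_mul]
    rcases eq_or_lt_of_le hm with hm' | hm'
    · have hP1 : P.coeff T.card = 1 := by
        rw [← hPdeg]; exact hPm.coeff_natDegree
      rw [← hm', hP1, mul_one, sub_self]
    · have h1 : f.coeff m = 0 := coeff_eq_zero_of_natDegree_lt (lt_of_le_of_lt hdeg hm')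
      have h2 : P.coeff m = 0 := coeff_eq_zero_of_natDegree_lt (by rw [hPdeg]; exact hm')
      rw [h1, h2, mul_zero, sub_zero]
  have heval : ∀ i ∈ T, g.eval (a i) = f.eval (a i) := by
    intro i hi
    rw [hg]
    simp only [eval_sub, eval_mul, eval_C, hP, eval_prod]
    rw [Finset.prod_eq_zero hi (by simp)]
    ring
  have hcoeff : g.coeff (T.card - 1)
      = f.coeff (T.card - 1) + f.coeff T.card * ∑ i ∈ T, a i := by
    rw [hg, Polynomial.coeff_sub, Polynomial.coeff_C_mul, hP,
      prod_X_sub_C_coeff_card_pred T a (Finset.card_pos.mpr hT)]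
    ring
  rw [← hcoeff, ← lag_sum_lt T ha g hgdeg]
  exact Finset.sum_congr rfl fun i hi => by rw [heval i hi]

lemma card_roots_le {a : Fin n → F} (ha : Function.Injective a) {f : F[X]} (hf : f ≠ 0)
    (s : Finset (Fin n)) (hs : ∀ i ∈ s, f.eval (a i) = 0) : s.card ≤ f.natDegree := by
  classical
  have h1 : s.image a ⊆ f.roots.toFinset := by
    intro x hx
    obtain ⟨i, hi, rfl⟩ := Finset.mem_image.mp hx
    rw [Multiset.mem_toFinset, Polynomial.mem_roots']
    exact ⟨hf, hs i hi⟩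
  calc s.card = (s.image a).card := (Finset.card_image_of_injective s ha).symm
    _ ≤ f.roots.toFinset.card := Finset.card_le_card h1
    _ ≤ Multiset.card f.roots := Multiset.toFinset_card_le _
    _ ≤ f.natDegree := Polynomial.card_roots' f

lemma eq_zero_of_roots (T : Finset (Fin n)) {a : Fin n → F} (ha : Function.Injective a)
    {f : F[X]} (hdeg : f.degree < (T.card : ℕ)) (h0 : ∀ i ∈ T, f.eval (a i) = 0) : f = 0 := by
  classical
  rw [Lagrange.eq_interpolate ha.injOn hdeg, Lagrange.interpolate_apply]
  apply Finset.sum_eq_zero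
  intro i hi
  rw [h0 i hi]
  simp

lemma degree_lt_of_coeff_zero {f : F[X]} {k : ℕ} (h1 : f.natDegree ≤ k) (h2 : f.coeff k = 0) :
    f.degree < (k : ℕ) := by
  rw [Polynomial.degree_lt_iff_coeff_zero]
  intro m hm
  rcases eq_or_lt_of_le hm with h | h
  · rwa [← h]
  · exact coeff_eq_zero_of_natDegree_lt (lt_of_le_of_lt h1 h)

lemma prod_ne (a : Fin n → F) (ha : Function.Injective a) (T : Finset (Fin n)) (i : Fin n) :
    (∏ j ∈ T.erase i, (a i - a j)⁻¹) ≠ 0 := by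
  rw [Finset.prod_ne_zero_iff]
  intro j hj
  apply inv_ne_zero
  apply sub_ne_zero_of_ne
  intro h
  exact (Finset.mem_erase.mp hj).1 (ha h.symm)

end Helpers

open Helpers in
lemma count1 {F : Type*} [Field F] [Fintype F] (n k : ℕ)
    (hk3 : 3 ≤ k) (hkn : k + 2 ≤ n)
    (a : Fin n → F) (ha : Function.Injective a)
    (v : Fin n → F) (hv : ∀ i, v i ≠ 0) :
    Set.ncard {w | w ∈ codeSet a v k ∧ wt w = n - k + 1} =
      (Fintype.card F - 1) *
        Set.ncard {T : Finset (Fin n) | T.card = k ∧ ∑ i ∈ T, a i = 0} := by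
  classical
  set TS : Set (Finset (Fin n)) := {T | T.card = k ∧ ∑ i ∈ T, a i = 0} with hTS
  set W : Set (Fin (n+1) → F) := {w | w ∈ codeSet a v k ∧ wt w = n - k + 1} with hW
  have hPdeg : ∀ T : Finset (Fin n), (∏ j ∈ T, (X - C (a j)) : F[X]).natDegree = T.card := by
    intro T
    rw [natDegree_prod _ _ fun i _ => X_sub_C_ne_zero (a i)]
    simp
  have hPmonic : ∀ T : Finset (Fin n), (∏ j ∈ T, (X - C (a j)) : F[X]).Monic :=
    fun T => monic_prod_of_monic _ _ fun i _ => monic_X_sub_C _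
  have heval0 : ∀ (c : F), c ≠ 0 → ∀ (T : Finset (Fin n)) (i : Fin n),
      ((C c * ∏ j ∈ T, (X - C (a j))).eval (a i) = 0 ↔ i ∈ T) := by
    intro c hc T i
    rw [eval_mul, eval_C, eval_prod, mul_eq_zero]
    have : ∀ j ∈ T, (X - C (a j)).eval (a i) = a i - a j := by intro j _; simp
    rw [Finset.prod_congr rfl this, Finset.prod_eq_zero_iff]
    constructor
    · rintro (h | ⟨j, hj, hij⟩)
      · exact absurd h hc
      · rwa [ha (sub_eq_zero.mp hij)]
    · intro hi
      exact Or.inr ⟨i, hi, by simp⟩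
  set Φ : Fˣ × TS → (Fin (n+1) → F) := fun p =>
    Fin.snoc
      (fun i => v i * ((C (p.1 : F) * ∏ j ∈ (p.2 : Finset (Fin n)), (X - C (a j))).eval (a i)))
      (p.1 : F) with hΦ
  have hmem : ∀ p : Fˣ × TS, Φ p ∈ W := by
    rintro ⟨c, ⟨T, hT⟩⟩
    obtain ⟨hTk, hT0⟩ := hT
    set f : F[X] := C (c : F) * ∏ j ∈ T, (X - C (a j)) with hf
    have hfd : f.natDegree ≤ k := by
      calc f.natDegree ≤ (C (c : F)).natDegree + (∏ j ∈ T, (X - C (a j))).natDegree :=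
            natDegree_mul_le
        _ = k := by rw [natDegree_C, hPdeg, hTk, zero_add]
    have hfc : f.coeff (k - 1) = 0 := by
      rw [hf, coeff_C_mul, ← hTk, prod_X_sub_C_coeff_card_pred T a (by rw [hTk]; omega), hT0,
        neg_zero, mul_zero]
    have hfk : f.coeff k = (c : F) := by
      rw [hf, coeff_C_mul, ← hTk, ← hPdeg T, (hPmonic T).coeff_natDegree, mul_one]
    constructor
    · refine ⟨f, hfd, hfc, ?_⟩
      rw [hfk]
    · show wt (Φ (c, ⟨T, hTk, hT0⟩)) = n - k + 1
      have h1 : wt (Φ (c, ⟨T, hTk, hT0⟩))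
          = wt (fun i => v i * f.eval (a i)) + 1 :=
        wt_snoc_ne _ _ c.ne_zero
      have h2 : wt (fun i => v i * f.eval (a i)) = Tᶜ.card := by
        apply wt_eq_of_support
        intro i
        rw [Finset.mem_compl, ← heval0 (c : F) c.ne_zero T i, hf]
        simp [mul_eq_zero, hv i]
      rw [h1, h2, Finset.card_compl, Fintype.card_fin, hTk]
  have hinj : Function.Injective Φ := by
    rintro ⟨c, ⟨T, hT⟩⟩ ⟨c', ⟨T', hT'⟩⟩ h
    have hc : (c : F) = (c' : F) := by
      have := congrFun h (Fin.last n)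
      simpa [Φ] using this
    have hT2 : T = T' := by
      ext i
      have hi := congrFun h (Fin.castSucc i)
      simp only [Φ, Fin.snoc_castSucc] at hi
      have h2 := mul_left_cancel₀ (hv i) hi
      rw [← heval0 (c : F) c.ne_zero T i, h2, heval0 (c' : F) c'.ne_zero T' i]
    simp only [Prod.mk.injEq, Subtype.mk.injEq]
    exact ⟨Units.ext hc, hT2⟩
  have hsurj : ∀ w ∈ W, ∃ p : Fˣ × TS, Φ p = w := by
    rintro w ⟨⟨f, hfd, hfc, rfl⟩, hwt⟩
    set Z : Finset (Fin n) := univ.filter (fun i => f.eval (a i) = 0) with hZ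
    have hZmem : ∀ i, i ∈ Z ↔ f.eval (a i) = 0 := by intro i; simp [hZ]
    have hsupp : wt (fun i => v i * f.eval (a i)) = Zᶜ.card := by
      apply wt_eq_of_support
      intro i
      rw [Finset.mem_compl, hZmem]
      simp [mul_eq_zero, hv i]
    have hZc : Zᶜ.card = n - Z.card := by rw [Finset.card_compl, Fintype.card_fin]
    by_cases hck : f.coeff k = 0
    · exfalso
      by_cases hf0 : f = 0
      · have h0 : wt (Fin.snoc (fun i => v i * f.eval (a i)) (f.coeff k) : Fin (n+1) → F)
            = 0 := by
          subst hf0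
          rw [show ((0 : F[X]).coeff k) = (0 : F) by simp, wt_snoc_eq]
          exact wt_eq_of_support _ ∅ (by simp)
        rw [h0] at hwt
        omega
      · have hdeg2 : f.natDegree ≤ k - 2 := by
          rw [Polynomial.natDegree_le_iff_coeff_eq_zero]
          intro m hm
          by_cases hm1 : m = k - 1
          · rwa [hm1]
          · by_cases hm2 : m = k
            · rwa [hm2]
            · exact coeff_eq_zero_of_natDegree_lt (lt_of_le_of_lt hfd (by omega))
        have hZle : Z.card ≤ k - 2 :=
          le_trans (card_roots_le ha hf0 Z (fun i hi => (hZmem i).mp hi)) hdeg2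
        rw [hck, wt_snoc_eq, hsupp, hZc] at hwt
        omega
    · have hf0 : f ≠ 0 := fun h => hck (by rw [h]; simp)
      have hZk : Z.card ≤ k :=
        le_trans (card_roots_le ha hf0 Z (fun i hi => (hZmem i).mp hi)) hfd
      have hwt2 : Zᶜ.card + 1 = n - k + 1 := by
        rw [← hwt, wt_snoc_ne _ _ hck, hsupp]
      have hZcard : Z.card = k := by omega
      set P : F[X] := C (f.coeff k) * ∏ j ∈ Z, (X - C (a j)) with hP
      have hprod1 : (∏ j ∈ Z, (X - C (a j)) : F[X]).coeff k = 1 := by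
        rw [← hZcard, ← hPdeg Z]
        exact (hPmonic Z).coeff_natDegree
      have hPk : P.coeff k = f.coeff k := by
        rw [hP, coeff_C_mul, hprod1, mul_one]
      have hPnd : P.natDegree ≤ k := by
        calc P.natDegree ≤ (C (f.coeff k)).natDegree + (∏ j ∈ Z, (X - C (a j))).natDegree :=
              natDegree_mul_le
          _ = k := by rw [natDegree_C, hPdeg, hZcard, zero_add]
      have hdiff : f - P = 0 := by
        apply eq_zero_of_roots Z ha
        · rw [hZcard]
          apply degree_lt_of_coeff_zero
          · exact le_trans (Polynomial.natDegree_sub_le f P) (max_le hfd hPnd)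
          · rw [Polynomial.coeff_sub, hPk, sub_self]
        · intro i hi
          rw [Polynomial.eval_sub, (hZmem i).mp hi, hP, eval_mul, eval_prod,
            Finset.prod_eq_zero hi (by simp), mul_zero, sub_zero]
      have hfP : f = P := sub_eq_zero.mp hdiff
      have hsum0 : ∑ i ∈ Z, a i = 0 := by
        have h1 := hfc
        nth_rewrite 1 [hfP] at h1
        rw [hP, coeff_C_mul] at h1
        rw [show k - 1 = Z.card - 1 by omega,
          prod_X_sub_C_coeff_card_pred Z a (by rw [hZcard]; omega)] at h1
        rcases mul_eq_zero.mp h1 with h | h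
        · exact absurd h hck
        · rwa [neg_eq_zero] at h
      refine ⟨⟨Units.mk0 (f.coeff k) hck, ⟨Z, hZcard, hsum0⟩⟩, ?_⟩
      show Fin.snoc _ _ = _
      simp only [Units.val_mk0]
      rw [← hP, ← hfP]
  have hbij : Function.Bijective (fun p : Fˣ × TS => (⟨Φ p, hmem p⟩ : W)) := by
    constructor
    · intro p q hpq
      exact hinj (congrArg Subtype.val hpq)
    · rintro ⟨w, hw⟩
      obtain ⟨p, hp⟩ := hsurj w hw
      exact ⟨p, Subtype.ext hp⟩
  calc W.ncard = Nat.card W := (Nat.card_coe_set_eq W).symm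
    _ = Nat.card (Fˣ × TS) := (Nat.card_eq_of_bijective _ hbij).symm
    _ = Nat.card Fˣ * Nat.card TS := Nat.card_prod _ _
    _ = (Fintype.card F - 1) * TS.ncard := by
        rw [Nat.card_eq_fintype_card, Fintype.card_units, Nat.card_coe_set_eq]

open Helpers in
lemma count2 {F : Type*} [Field F] [Fintype F] (n k : ℕ)
    (hk3 : 3 ≤ k) (hkn : k + 2 ≤ n)
    (a : Fin n → F) (ha : Function.Injective a)
    (v : Fin n → F) (hv : ∀ i, v i ≠ 0) :
    Set.ncard {w | w ∈ dualSet (codeSet a v k) ∧ wt w = k} =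
      (Fintype.card F - 1) *
        Set.ncard {T : Finset (Fin n) | T.card = k ∧ ∑ i ∈ T, a i = 0} := by
  classical
  set TS : Set (Finset (Fin n)) := {T | T.card = k ∧ ∑ i ∈ T, a i = 0} with hTS
  set W : Set (Fin (n+1) → F) := {w | w ∈ dualSet (codeSet a v k) ∧ wt w = k} with hW
  have hu : ∀ (T : Finset (Fin n)) (i : Fin n), (∏ j ∈ T.erase i, (a i - a j)⁻¹) ≠ 0 :=
    fun T i => prod_ne a ha T i
  set Ψ : Fˣ × TS → (Fin (n+1) → F) := fun p =>
    Fin.snoc (fun i => if i ∈ (p.2 : Finset (Fin n)) then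
      (p.1 : F) * (v i)⁻¹ * ∏ j ∈ (p.2 : Finset (Fin n)).erase i, (a i - a j)⁻¹ else 0)
      (0 : F) with hΨ
  have hmem : ∀ p : Fˣ × TS, Ψ p ∈ W := by
    rintro ⟨c, ⟨T, hT⟩⟩
    obtain ⟨hTk, hT0⟩ := hT
    have hTne : T.Nonempty := Finset.card_pos.mp (by rw [hTk]; omega)
    constructor
    · rintro x ⟨f, hfd, hfc, rfl⟩
      rw [Fin.sum_univ_castSucc]
      simp only [Ψ, Fin.snoc_castSucc, Fin.snoc_last, mul_zero, add_zero]
      have h1 : ∀ i : Fin n, (v i * f.eval (a i)) *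
          (if i ∈ T then (c : F) * (v i)⁻¹ * ∏ j ∈ T.erase i, (a i - a j)⁻¹ else 0)
          = if i ∈ T then
              (c : F) * ((∏ j ∈ T.erase i, (a i - a j)⁻¹) * f.eval (a i)) else 0 := by
        intro i
        by_cases hi : i ∈ T
        · rw [if_pos hi, if_pos hi]
          have hvi : v i * (v i)⁻¹ = 1 := mul_inv_cancel₀ (hv i)
          calc v i * f.eval (a i) * ((c : F) * (v i)⁻¹ * ∏ j ∈ T.erase i, (a i - a j)⁻¹)
              = (v i * (v i)⁻¹) *
                ((c : F) * ((∏ j ∈ T.erase i, (a i - a j)⁻¹) * f.eval (a i))) := by ring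
            _ = (c : F) * ((∏ j ∈ T.erase i, (a i - a j)⁻¹) * f.eval (a i)) := by
                rw [hvi, one_mul]
        · rw [if_neg hi, if_neg hi, mul_zero]
      rw [Finset.sum_congr rfl (fun i _ => h1 i), Finset.sum_ite_mem, Finset.univ_inter,
        ← Finset.mul_sum, lag_sum_le T ha hTne f (by rw [hTk]; exact hfd), hTk, hfc, hT0,
        mul_zero, add_zero, mul_zero]
    · show wt (Ψ (c, ⟨T, hTk, hT0⟩)) = k
      have h1 : wt (Ψ (c, ⟨T, hTk, hT0⟩))
          = wt (fun i => if i ∈ T then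
              (c : F) * (v i)⁻¹ * ∏ j ∈ T.erase i, (a i - a j)⁻¹ else 0) :=
        wt_snoc_eq _
      rw [h1, wt_eq_of_support _ T, hTk]
      intro i
      by_cases hi : i ∈ T
      · rw [if_pos hi]
        simp only [hi, iff_true]
        exact mul_ne_zero (mul_ne_zero c.ne_zero (inv_ne_zero (hv i))) (hu T i)
      · rw [if_neg hi]
        simp [hi]
  have hinj : Function.Injective Ψ := by
    rintro ⟨c, ⟨T, hT⟩⟩ ⟨c', ⟨T', hT'⟩⟩ h
    obtain ⟨hTk, hT0⟩ := hT
    obtain ⟨hTk', hT0'⟩ := hT'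
    have hTT : T = T' := by
      ext i
      have hi := congrFun h (Fin.castSucc i)
      simp only [Ψ, Fin.snoc_castSucc] at hi
      constructor
      · intro hiT
        by_contra hiT'
        rw [if_pos hiT, if_neg hiT'] at hi
        exact (mul_ne_zero (mul_ne_zero c.ne_zero (inv_ne_zero (hv i))) (hu T i)) hi
      · intro hiT'
        by_contra hiT
        rw [if_neg hiT, if_pos hiT'] at hi
        exact (mul_ne_zero (mul_ne_zero c'.ne_zero (inv_ne_zero (hv i))) (hu T' i)) hi.symm
    have hcc : (c : F) = (c' : F) := by
      obtain ⟨i0, hi0⟩ := Finset.card_pos.mp (show 0 < T.card by rw [hTk]; omega)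
      have hi := congrFun h (Fin.castSucc i0)
      simp only [Ψ, Fin.snoc_castSucc] at hi
      rw [← hTT, if_pos hi0, if_pos hi0] at hi
      have h2 := mul_right_cancel₀ (hu T i0) hi
      exact mul_right_cancel₀ (inv_ne_zero (hv i0)) h2
    simp only [Prod.mk.injEq, Subtype.mk.injEq]
    exact ⟨Units.ext hcc, hTT⟩
  have hsurj : ∀ w ∈ W, ∃ p : Fˣ × TS, Ψ p = w := by
    rintro y ⟨hy, hwt⟩
    set g : Fin n → F := fun i => y (Fin.castSucc i) with hg
    have hy_eq : y = Fin.snoc g (y (Fin.last n)) := by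
      funext i
      refine Fin.lastCases ?_ ?_ i
      · rw [Fin.snoc_last]
      · intro j; rw [Fin.snoc_castSucc]
    have hcond : ∀ f : F[X], f.natDegree ≤ k → f.coeff (k - 1) = 0 →
        (∑ i : Fin n, (v i * f.eval (a i)) * g i) + f.coeff k * y (Fin.last n) = 0 := by
      intro f h1 h2
      have h3 := hy _ ⟨f, h1, h2, rfl⟩
      rw [Fin.sum_univ_castSucc] at h3
      simpa [Fin.snoc_castSucc, Fin.snoc_last] using h3
    have hXj : ∀ j : ℕ, j ≤ k - 2 → ∑ i : Fin n, (v i * g i) * a i ^ j = 0 := by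
      intro j hj
      have h := hcond (X ^ j) (by rw [natDegree_X_pow]; omega)
        (by rw [coeff_X_pow, if_neg (by omega)])
      rw [coeff_X_pow, if_neg (by omega), zero_mul, add_zero] at h
      rw [← h]
      exact Finset.sum_congr rfl fun i _ => by simp only [eval_pow, eval_X]; ring
    have hXk : (∑ i : Fin n, (v i * g i) * a i ^ k) + y (Fin.last n) = 0 := by
      have h := hcond (X ^ k) (le_of_eq (natDegree_X_pow k))
        (by rw [coeff_X_pow, if_neg (by omega)])
      rw [coeff_X_pow, if_pos rfl, one_mul] at h
      rw [← h]
      congr 1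
      exact Finset.sum_congr rfl fun i _ => by simp only [eval_pow, eval_X]; ring
    set s : Finset (Fin n) := univ.filter (fun i => g i ≠ 0) with hs_def
    have hsc : ∀ i, i ∈ s ↔ g i ≠ 0 := by intro i; simp [hs_def]
    have hwtg : wt g = s.card := wt_eq_of_support g s (fun i => (hsc i).symm)
    by_cases hyl : y (Fin.last n) = 0
    · -- main case
      have h1 : wt y = s.card := by
        have h2 : y = Fin.snoc g (0 : F) := by rw [hy_eq, hyl]
        rw [h2, wt_snoc_eq, hwtg]
      have hscard : s.card = k := by rw [← h1, hwt]
      have hsne : s.Nonempty := Finset.card_pos.mp (by rw [hscard]; omega)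
      have hXk' : ∑ i : Fin n, (v i * g i) * a i ^ k = 0 := by
        rw [hyl, add_zero] at hXk
        exact hXk
      set u' : Fin n → F := fun i =>
        if i ∈ s then ∏ j ∈ s.erase i, (a i - a j)⁻¹ else 0 with hu'def
      have hu'sum : ∀ m : ℕ, ∑ i : Fin n, u' i * a i ^ m
          = ∑ i ∈ s, (∏ j ∈ s.erase i, (a i - a j)⁻¹) * (X ^ m : F[X]).eval (a i) := by
        intro m
        simp only [hu'def, ite_mul, zero_mul]
        rw [Finset.sum_ite_mem, Finset.univ_inter]
        exact Finset.sum_congr rfl fun i _ => by simp only [eval_pow, eval_X]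
      have hu'j : ∀ j : ℕ, j ≤ k - 2 → ∑ i : Fin n, u' i * a i ^ j = 0 := by
        intro j hj
        rw [hu'sum j, lag_sum_lt s ha (X ^ j)
          (by rw [degree_X_pow]; exact_mod_cast (show j < s.card by omega)),
          coeff_X_pow, if_neg (by omega)]
      have hu'k : ∑ i : Fin n, u' i * a i ^ k = ∑ i ∈ s, a i := by
        rw [hu'sum k, lag_sum_le s ha hsne (X ^ k) (by rw [natDegree_X_pow, hscard]), hscard,
          coeff_X_pow, if_neg (by omega), coeff_X_pow, if_pos rfl, zero_add, one_mul]
      obtain ⟨i0, hi0⟩ := hsne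
      set lam : F := (v i0 * g i0) * (∏ j ∈ s.erase i0, (a i0 - a j)⁻¹)⁻¹ with hlam
      have hgi0 : g i0 ≠ 0 := (hsc i0).mp hi0
      have hlamne : lam ≠ 0 :=
        mul_ne_zero (mul_ne_zero (hv i0) hgi0) (inv_ne_zero (hu s i0))
      have hd : (fun i => v i * g i - lam * u' i) = 0 := by
        apply vand_kernel ha (m := k - 1) (s.erase i0)
        · intro i hne
          by_contra hmem'
          rw [Finset.mem_erase] at hmem'
          push_neg at hmem'
          apply hne
          by_cases hii : i = i0
          · subst hii
            simp only [hu'def, if_pos hi0, hlam]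
            rw [inv_mul_cancel_right₀ (hu s i)]
            exact sub_self _
          · have his := hmem' hii
            have hg0 : g i = 0 := by by_contra hgg; exact his ((hsc i).mpr hgg)
            simp [hg0, hu'def, his]
        · rw [Finset.card_erase_of_mem hi0, hscard]
        · intro j hj
          have e1 : ∑ i : Fin n, (v i * g i - lam * u' i) * a i ^ j
              = (∑ i : Fin n, (v i * g i) * a i ^ j) - lam * ∑ i : Fin n, u' i * a i ^ j := by
            rw [Finset.mul_sum, ← Finset.sum_sub_distrib]
            exact Finset.sum_congr rfl fun i _ => by ring
          rw [e1, hXj j (by omega), hu'j j (by omega), mul_zero, sub_zero]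
      have hvg : ∀ i, v i * g i = lam * u' i := by
        intro i
        have h2 := congrFun hd i
        simp only [Pi.zero_apply] at h2
        exact sub_eq_zero.mp h2
      have hsum0 : ∑ i ∈ s, a i = 0 := by
        have h2 : ∑ i : Fin n, (v i * g i) * a i ^ k = lam * ∑ i ∈ s, a i := by
          rw [← hu'k, Finset.mul_sum]
          exact Finset.sum_congr rfl fun i _ => by rw [hvg i]; ring
        have h3 : lam * ∑ i ∈ s, a i = 0 := h2.symm.trans hXk'
        exact (mul_eq_zero.mp h3).resolve_left hlamne
      refine ⟨⟨Units.mk0 lam hlamne, ⟨s, hscard, hsum0⟩⟩, ?_⟩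
      have h4 : y = Fin.snoc g (0 : F) := by rw [hy_eq, hyl]
      rw [h4]
      funext i
      refine Fin.lastCases ?_ ?_ i
      · simp only [hΨ, Fin.snoc_last]
      · intro j
        simp only [hΨ, Fin.snoc_castSucc, Units.val_mk0]
        by_cases his : j ∈ s
        · rw [if_pos his]
          have h3 := hvg j
          rw [hu'def] at h3
          simp only [if_pos his] at h3
          have hvj : (v j)⁻¹ * v j = 1 := inv_mul_cancel₀ (hv j)
          calc lam * (v j)⁻¹ * ∏ j' ∈ s.erase j, (a j - a j')⁻¹
              = (v j)⁻¹ * (lam * ∏ j' ∈ s.erase j, (a j - a j')⁻¹) := by ring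
            _ = (v j)⁻¹ * (v j * g j) := by rw [← h3]
            _ = g j := by rw [← mul_assoc, hvj, one_mul]
        · rw [if_neg his]
          have hg0 : g j = 0 := by by_contra hgg; exact his ((hsc j).mpr hgg)
          rw [hg0]
    · -- impossible case: last coordinate nonzero
      exfalso
      have h1 : wt y = s.card + 1 := by
        have h2 : wt y = wt (Fin.snoc g (y (Fin.last n)) : Fin (n+1) → F) := by rw [← hy_eq]
        rw [h2, wt_snoc_ne g _ hyl, hwtg]
      have hscard : s.card = k - 1 := by omega
      have hcz : (fun i => v i * g i) = 0 := by
        apply vand_kernel ha (m := k - 1) s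
        · intro i hne
          rw [hsc]
          intro hg0
          exact hne (by rw [hg0, mul_zero])
        · omega
        · intro j hj
          exact hXj j (by omega)
      have hgz : ∀ i, g i = 0 := by
        intro i
        have h2 := congrFun hcz i
        simp only [Pi.zero_apply] at h2
        rcases mul_eq_zero.mp h2 with h | h
        · exact absurd h (hv i)
        · exact h
      have hse : s = ∅ := by
        ext i
        simp [hsc, hgz i]
      rw [hse] at hscard
      simp at hscard
      omega
  have hbij : Function.Bijective (fun p : Fˣ × TS => (⟨Ψ p, hmem p⟩ : W)) := by
    constructor
    · intro p q hpq
      exact hinj (congrArg Subtype.val hpq)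
    · rintro ⟨w, hw⟩
      obtain ⟨p, hp⟩ := hsurj w hw
      exact ⟨p, Subtype.ext hp⟩
  calc W.ncard = Nat.card W := (Nat.card_coe_set_eq W).symm
    _ = Nat.card (Fˣ × TS) := (Nat.card_eq_of_bijective _ hbij).symm
    _ = Nat.card Fˣ * Nat.card TS := Nat.card_prod _ _
    _ = (Fintype.card F - 1) * TS.ncard := by
        rw [Nat.card_eq_fintype_card, Fintype.card_units, Nat.card_coe_set_eq]

theorem stmt10 {F : Type*} [Field F] [Fintype F] (n k : ℕ)
    (hk3 : 3 ≤ k) (hkn : k + 2 ≤ n) (hnq : n ≤ Fintype.card F)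
    (a : Fin n → F) (ha : Function.Injective a)
    (v : Fin n → F) (hv : ∀ i, v i ≠ 0)
    (hzs : ∃ T : Finset (Fin n), T.card = k ∧ ∑ i ∈ T, a i = 0) :
    Set.ncard {w | w ∈ codeSet a v k ∧ wt w = n - k + 1} =
        (Fintype.card F - 1) *
          Set.ncard {T : Finset (Fin n) | T.card = k ∧ ∑ i ∈ T, a i = 0} ∧
      Set.ncard {w | w ∈ dualSet (codeSet a v k) ∧ wt w = k} =
        (Fintype.card F - 1) *
          Set.ncard {T : Finset (Fin n) | T.card = k ∧ ∑ i ∈ T, a i = 0} :=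
  ⟨count1 n k hk3 hkn a ha v hv, count2 n k hk3 hkn a ha v hv⟩
end
end

section
/- Suppose n is odd and k = (n+1)/2. Then the [n+1,(n+1)/2]_q code C_{(n+1)/2}(S,v,∞) is not self-dual, for every choice of the set S of n distinct elements of F_q and every vector v of nonzero elements of F_q. -/
open Polynomial Finset

noncomputable section

lemma inner_snoc {F : Type*} [Field F] {n : ℕ} (f g : Fin n → F) (b c : F) :
    ∑ i : Fin (n+1), (Fin.snoc f b : Fin (n+1) → F) i * (Fin.snoc g c : Fin (n+1) → F) i
      = (∑ i, f i * g i) + b * c := by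
  rw [Fin.sum_univ_castSucc]
  simp

lemma mem_mono {F : Type*} [Field F] {n : ℕ} (a v : Fin n → F) (k j : ℕ)
    (hj : j ≤ k) (hjk : j ≠ k - 1) :
    (Fin.snoc (fun i => v i * a i ^ j) (if j = k then 1 else 0) : Fin (n+1) → F)
      ∈ codeSet a v k := by
  refine ⟨X ^ j, ?_, ?_, ?_⟩
  · simpa using hj
  · rw [coeff_X_pow, if_neg (Ne.symm hjk)]
  · simp only [eval_pow, eval_X, coeff_X_pow]
    simp [eq_comm]

theorem stmt14 {F : Type*} [Field F] [Fintype F] (n : ℕ) (hodd : Odd n)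
    (hk3 : 3 ≤ (n + 1) / 2) (hkn : (n + 1) / 2 + 2 ≤ n) (hnq : n ≤ Fintype.card F)
    (a : Fin n → F) (ha : Function.Injective a)
    (v : Fin n → F) (hv : ∀ i, v i ≠ 0) :
    codeSet a v ((n + 1) / 2) ≠ dualSet (codeSet a v ((n + 1) / 2)) := by
  set k := (n+1)/2 with hkdef
  intro h
  have hk2 : 2 * k = n + 1 := by
    obtain ⟨t, ht⟩ := hodd; omega
  have horth : ∀ x ∈ codeSet a v k, ∀ y ∈ codeSet a v k, ∑ i, x i * y i = 0 := by
    intro x hx y hy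
    rw [h] at hy
    exact hy x hx
  have hp : ∀ m, m < n → ∑ i, v i ^ 2 * a i ^ m = 0 := by
    intro m hm
    obtain ⟨j, l, hj, hl, hj1, hl1, hjl, hsum⟩ :
        ∃ j l, j ≤ k ∧ l ≤ k ∧ j ≠ k - 1 ∧ l ≠ k - 1 ∧ (j ≠ k ∨ l ≠ k) ∧ j + l = m := by
      rcases le_or_gt m (k - 2) with h1 | h1
      · exact ⟨m, 0, by omega, by omega, by omega, by omega, by omega, by omega⟩
      rcases le_or_gt m (k - 1) with h2 | h2
      · exact ⟨k - 2, 1, by omega, by omega, by omega, by omega, by omega, by omega⟩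
      · exact ⟨k, m - k, by omega, by omega, by omega, by omega, by omega, by omega⟩
    have h0 := horth _ (mem_mono a v k j hj hj1) _ (mem_mono a v k l hl hl1)
    rw [inner_snoc] at h0
    have hterm : (if j = k then (1:F) else 0) * (if l = k then (1:F) else 0) = 0 := by
      rcases hjl with h' | h' <;> simp [h']
    rw [hterm, add_zero] at h0
    calc ∑ i, v i ^ 2 * a i ^ m
        = ∑ i, (v i * a i ^ j) * (v i * a i ^ l) := by
          apply Finset.sum_congr rfl; intro i _; rw [← hsum, pow_add]; ring
      _ = 0 := h0
  have hn5 : 5 ≤ n := by omega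
  set i0 : Fin n := ⟨0, by omega⟩ with hi0
  set Q : F[X] := ∏ j ∈ Finset.univ.erase i0, (X - C (a j)) with hQ
  have hdeg : Q.natDegree < n := by
    calc Q.natDegree ≤ ∑ j ∈ Finset.univ.erase i0, (X - C (a j)).natDegree :=
          Polynomial.natDegree_prod_le _ _
      _ ≤ ∑ _j ∈ Finset.univ.erase i0, 1 := by
          apply Finset.sum_le_sum; intro j _; exact natDegree_X_sub_C_le _
      _ < n := by
          rw [Finset.sum_const, smul_eq_mul, mul_one]
          have h1 : (Finset.univ.erase i0).card < (Finset.univ : Finset (Fin n)).card :=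
            Finset.card_erase_lt_of_mem (Finset.mem_univ i0)
          simpa using h1
  have hsum0 : ∑ i, v i ^ 2 * Q.eval (a i) = 0 := by
    have hev : ∀ i : Fin n, Q.eval (a i) = ∑ m ∈ Finset.range n, Q.coeff m * a i ^ m := fun i =>
      Polynomial.eval_eq_sum_range' hdeg _
    calc ∑ i, v i ^ 2 * Q.eval (a i)
        = ∑ i, ∑ m ∈ Finset.range n, Q.coeff m * (v i ^ 2 * a i ^ m) := by
          apply Finset.sum_congr rfl; intro i _
          rw [hev i, Finset.mul_sum]
          apply Finset.sum_congr rfl; intro m _; ring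
      _ = ∑ m ∈ Finset.range n, Q.coeff m * ∑ i, v i ^ 2 * a i ^ m := by
          rw [Finset.sum_comm]
          apply Finset.sum_congr rfl; intro m _; rw [Finset.mul_sum]
      _ = 0 := by
          apply Finset.sum_eq_zero; intro m hm
          rw [hp m (Finset.mem_range.mp hm), mul_zero]
  have heval0 : ∀ i, i ≠ i0 → Q.eval (a i) = 0 := by
    intro i hi
    rw [hQ, eval_prod]
    apply Finset.prod_eq_zero (Finset.mem_erase.mpr ⟨hi, Finset.mem_univ i⟩)
    simp
  have hsum1 : ∑ i, v i ^ 2 * Q.eval (a i) = v i0 ^ 2 * Q.eval (a i0) := by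
    rw [Finset.sum_eq_single i0]
    · intro i _ hi; rw [heval0 i hi, mul_zero]
    · intro hi; exact absurd (Finset.mem_univ i0) hi
  have hQ0 : Q.eval (a i0) ≠ 0 := by
    rw [hQ, eval_prod]
    apply Finset.prod_ne_zero_iff.mpr
    intro j hj
    simp only [eval_sub, eval_X, eval_C, sub_ne_zero]
    intro he
    exact (Finset.mem_erase.mp hj).1 (ha he.symm)
  have hz : v i0 ^ 2 * Q.eval (a i0) = 0 := hsum1 ▸ hsum0
  rcases mul_eq_zero.mp hz with h' | h'
  · exact hv i0 (by simpa using pow_eq_zero_iff (n := 2) (by norm_num) |>.mp h')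
  · exact hQ0 h'
end
end
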